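/- arXiv:1102.3749 — 6 statements merged into one kernel-verified Lean document; each statement's English description precedes it below -/
import Mathlib

section
/- Suppose c ≥ 0 and x = (x_{i,t}) with x_{i,t} ∈ [0,1] for i ∈ {1,…,n}, t ∈ {1,…,B} satisfies: ∑_{t=1}^{B} x_{i,t} ≤ 1 for every i, and ∑_{i=1}^{n} ∑_{t'=1}^{t} x_{i,t'}·m_{i,t} ≤ c·t for every t ∈ {1,…,B}. Define x̄_{i,2^0} = x_{i,1}/2 + (x_{i,2}+x_{i,3})/2 and, for 1 ≤ j ≤ L, x̄_{i,2^j} = (1/2)·∑_{t=2^{j+1}}^{min(2^{j+2}−1, B)} x_{i,t}. Then: each x̄_{i,2^j} ∈ [0,1]; ∑_{j=0}^{L} x̄_{i,2^j} ≤ 1 for every i; ∑_{i=1}^{n} ∑_{j'=0}^{j} x̄_{i,2^{j'}}·m_{i,2^{j+1}} ≤ 2c·2^j for every j ∈ {0,…,L}; and ∑_{i=1}^{n} ∑_{j=0}^{L} ER_{i,2^{j+1}}·x̄_{i,2^j} ≥ (1/2)·∑_{i=1}^{n} ∑_{t=1}^{B} ER_{i,t}·x_{i,t}. In particular, the optimum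 of the polynomial-size LP (with variables x̄_{i,2^j}, the above constraints, and objective ∑_{i,j} ER_{i,2^{j+1}}·x̄_{i,2^j}) is at least half the optimum of the time-indexed LP (with variables x_{i,t}, the above constraints with the same c, and objective ∑_{i,t} ER_{i,t}·x_{i,t}). -/
/-!
Split the time axis into the dyadic blocks `{1,2,3}` and `[2^(j+1), 2^(j+2) - 1]` (`j ≥ 1`), so
that `x̄_j` is half the mass that `x` puts on block `j`. The blocks `0, …, j` tile `[1, 2^(j+2) - 1]`,
so a prefix sum of `x̄` is half a prefix sum of `x`: this gives the packing constraint and, together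
with the monotonicity of `m`, reduces the load constraint at `2^(j+1)` to that of `x` at
`min (2^(j+2) - 1) B ≤ 4 · 2^j`. Every time `t` in block `j` is at least `2^(j+1)` except `t = 1`,
so `ER t ≤ ER (2^(j+1))` there (using `ER 1 = ER 2`), and the factor `1/2` gives the reward bound.
-/

open Finset

namespace DyadicGrouping

theorem sum_Icc_sum_Ioc_of_monotone {M : Type*} [AddCommMonoid M] {b : ℕ → ℕ} (hb : Monotone b)
    (g : ℕ → M) (J : ℕ) :
    ∑ j ∈ Icc 0 J, ∑ t ∈ Ioc (b j) (b (j + 1)), g t = ∑ t ∈ Ioc (b 0) (b (J + 1)), g t := by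
  induction J with
  | zero => simp
  | succ J ih =>
    rw [sum_Icc_succ_top (Nat.zero_le _), ih,
      sum_Ioc_consecutive g (hb (Nat.zero_le _)) (hb (Nat.le_succ _))]

theorem sum_Icc_min_of_eq_zero {M : Type*} [AddCommMonoid M] {g : ℕ → M} {B : ℕ}
    (hg : ∀ t, B < t → g t = 0) (a b : ℕ) :
    ∑ t ∈ Icc a (min b B), g t = ∑ t ∈ Icc a b, g t := by
  refine sum_subset (Icc_subset_Icc le_rfl (min_le_left b B)) fun t ht hnt => hg t ?_
  simp only [mem_Icc] at ht hnt
  omega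

def blockEnd (j : ℕ) : ℕ := if j = 0 then 0 else 2 ^ (j + 1) - 1

def block (j : ℕ) : Finset ℕ := Ioc (blockEnd j) (blockEnd (j + 1))

theorem blockEnd_succ (j : ℕ) : blockEnd (j + 1) = 2 ^ (j + 2) - 1 := by
  simp [blockEnd]

theorem blockEnd_monotone : Monotone blockEnd := by
  refine monotone_nat_of_le_succ fun j => ?_
  have := Nat.pow_le_pow_right two_pos (by omega : j + 1 ≤ j + 2)
  rw [blockEnd_succ, blockEnd]
  split_ifs <;> omega

theorem block_zero : block 0 = {1, 2, 3} := by decide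

theorem block_eq_Icc {j : ℕ} (hj : j ≠ 0) : block j = Icc (2 ^ (j + 1)) (2 ^ (j + 2) - 1) := by
  have := Nat.one_le_two_pow (n := j + 1)
  rw [block, blockEnd_succ, blockEnd, if_neg hj, ← Icc_add_one_left_eq_Ioc, Nat.sub_add_cancel this]

theorem one_le_of_mem_block {j t : ℕ} (ht : t ∈ block j) : 1 ≤ t :=
  Nat.one_le_iff_ne_zero.mpr (mem_Ioc.mp ht).1.ne_bot

theorem two_pow_le_max_of_mem_block {j t : ℕ} (ht : t ∈ block j) : 2 ^ (j + 1) ≤ max t 2 := by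
  rcases eq_or_ne j 0 with rfl | hj
  · exact le_max_right t 2
  · exact le_max_of_le_left (mem_Icc.mp (block_eq_Icc hj ▸ ht)).1

theorem sum_Icc_sum_block {M : Type*} [AddCommMonoid M] (g : ℕ → M) (J : ℕ) :
    ∑ j ∈ Icc 0 J, ∑ t ∈ block j, g t = ∑ t ∈ Icc 1 (2 ^ (J + 2) - 1), g t := by
  have := sum_Icc_sum_Ioc_of_monotone blockEnd_monotone g J
  rwa [blockEnd_succ, show blockEnd 0 = 0 from rfl, ← Icc_add_one_left_eq_Ioc] at this

theorem two_pow_le_two_pow_add_two_sub_one (L : ℕ) : 2 ^ L ≤ 2 ^ (L + 2) - 1 := by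
  have := Nat.pow_lt_pow_right one_lt_two (Nat.lt_add_of_pos_right two_pos : L < L + 2)
  omega

theorem min_two_pow_mem_Icc (j L : ℕ) : min (2 ^ (j + 2) - 1) (2 ^ L) ∈ Icc 1 (2 ^ L) := by
  have := Nat.one_lt_two_pow (n := j + 2) (by omega)
  have := Nat.one_le_two_pow (n := L)
  simp only [mem_Icc]
  omega

theorem cast_min_two_pow_le (j L : ℕ) :
    ((min (2 ^ (j + 2) - 1) (2 ^ L) : ℕ) : ℝ) ≤ 4 * 2 ^ j := by
  calc ((min (2 ^ (j + 2) - 1) (2 ^ L) : ℕ) : ℝ) ≤ ((2 ^ (j + 2) : ℕ) : ℝ) := by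
        exact_mod_cast (min_le_left _ _).trans (Nat.sub_le _ _)
    _ = 4 * 2 ^ j := by push_cast; ring

theorem apply_two_pow_le_apply_min {L : ℕ} {m : ℕ → ℝ}
    (hm_mono : ∀ t ∈ Icc 1 (2 * 2 ^ L), ∀ t' ∈ Icc 1 (2 * 2 ^ L), t ≤ t' → m t ≤ m t')
    (hm_stable : ∀ t ∈ Icc (2 ^ L) (2 * 2 ^ L), m t = m (2 ^ L)) {j : ℕ} (hj : j ≤ L) :
    m (2 ^ (j + 1)) ≤ m (min (2 ^ (j + 2) - 1) (2 ^ L)) := by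
  have h2L : 2 ^ (j + 1) ≤ 2 * 2 ^ L := by
    rw [← pow_succ']
    exact Nat.pow_le_pow_right two_pos (by omega)
  have hdouble : 2 ^ (j + 2) = 2 * 2 ^ (j + 1) := pow_succ' 2 (j + 1)
  have := Nat.one_le_two_pow (n := j + 1)
  rcases le_or_gt (2 ^ (j + 1)) (2 ^ L) with h | h
  · exact hm_mono _ (mem_Icc.mpr ⟨by omega, h2L⟩) _ (mem_Icc.mpr ⟨by omega, by omega⟩) (by omega)
  · rw [hm_stable _ (mem_Icc.mpr ⟨h.le, h2L⟩), min_eq_right (by omega)]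

theorem apply_le_apply_two_pow_of_mem_block {L : ℕ} {f : ℕ → ℝ}
    (hf : ∀ t ∈ Icc 1 (2 * 2 ^ L), ∀ t' ∈ Icc 1 (2 * 2 ^ L), t ≤ t' → f t' ≤ f t)
    (hf12 : f 1 = f 2) {j t : ℕ} (hj : j ≤ L) (ht : t ∈ block j) (htL : t ≤ 2 ^ L) :
    f t ≤ f (2 ^ (j + 1)) := by
  have ht1 := one_le_of_mem_block ht
  have hL := Nat.one_le_two_pow (n := L)
  have hmax : f t = f (max t 2) := by
    rcases (by omega : t = 1 ∨ 2 ≤ t) with rfl | h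
    · exact hf12
    · rw [max_eq_left h]
  have h2L : 2 ^ (j + 1) ≤ 2 * 2 ^ L := by
    rw [← pow_succ']
    exact Nat.pow_le_pow_right two_pos (by omega)
  rw [hmax]
  exact hf _ (mem_Icc.mpr ⟨Nat.one_le_two_pow, h2L⟩) _ (mem_Icc.mpr ⟨by omega, by omega⟩)
    (two_pow_le_max_of_mem_block ht)

section Item

variable {L : ℕ} {x xb : ℕ → ℝ}

theorem xbar_eq_half_sum_block (h0 : xb 0 = x 1 / 2 + (x 2 + x 3) / 2)
    (hpos : ∀ j, 1 ≤ j → j ≤ L →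
      xb j = (1 / 2) * ∑ t ∈ Icc (2 ^ (j + 1)) (min (2 ^ (j + 2) - 1) (2 ^ L)), x t)
    (hx : ∀ t, 2 ^ L < t → x t = 0) {j : ℕ} (hj : j ≤ L) :
    xb j = (1 / 2) * ∑ t ∈ block j, x t := by
  rcases eq_or_ne j 0 with rfl | hj0
  · rw [h0, block_zero, sum_insert (by decide), sum_insert (by decide), sum_singleton]
    ring
  · rw [hpos j (Nat.one_le_iff_ne_zero.mpr hj0) hj, sum_Icc_min_of_eq_zero hx, block_eq_Icc hj0]

variable (hxb : ∀ j ≤ L, xb j = (1 / 2) * ∑ t ∈ block j, x t)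
include hxb

theorem sum_Icc_xbar {j : ℕ} (hj : j ≤ L) :
    ∑ j' ∈ Icc 0 j, xb j' = (1 / 2) * ∑ t ∈ Icc 1 (2 ^ (j + 2) - 1), x t := by
  rw [sum_congr rfl fun j' hj' => hxb j' ((mem_Icc.mp hj').2.trans hj), ← mul_sum,
    sum_Icc_sum_block]

theorem sum_xbar_le_one (hx : ∀ t, 2 ^ L < t → x t = 0) (hsum : ∑ t ∈ Icc 1 (2 ^ L), x t ≤ 1) :
    ∑ j ∈ Icc 0 L, xb j ≤ 1 := by
  rw [sum_Icc_xbar hxb le_rfl, ← sum_Icc_min_of_eq_zero hx,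
    min_eq_right (two_pow_le_two_pow_add_two_sub_one L)]
  linarith

theorem xbar_nonneg (hx0 : ∀ t, 0 ≤ x t) {j : ℕ} (hj : j ≤ L) : 0 ≤ xb j := by
  rw [hxb j hj]
  exact mul_nonneg (by norm_num) (sum_nonneg fun t _ => hx0 t)

theorem xbar_mem_Icc (hx0 : ∀ t, 0 ≤ x t) (hx : ∀ t, 2 ^ L < t → x t = 0)
    (hsum : ∑ t ∈ Icc 1 (2 ^ L), x t ≤ 1) {j : ℕ} (hj : j ≤ L) : xb j ∈ Set.Icc (0 : ℝ) 1 :=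
  ⟨xbar_nonneg hxb hx0 hj,
    (single_le_sum (fun _ hj' => xbar_nonneg hxb hx0 (mem_Icc.mp hj').2)
      (mem_Icc.mpr ⟨j.zero_le, hj⟩)).trans
      (sum_xbar_le_one hxb hx hsum)⟩

theorem sum_xbar_mul_le {m : ℕ → ℝ} (hx0 : ∀ t, 0 ≤ x t) (hx : ∀ t, 2 ^ L < t → x t = 0)
    {j : ℕ} (hj : j ≤ L) (hm : m (2 ^ (j + 1)) ≤ m (min (2 ^ (j + 2) - 1) (2 ^ L))) :
    ∑ j' ∈ Icc 0 j, xb j' * m (2 ^ (j + 1)) ≤ (1 / 2) *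
      ∑ t ∈ Icc 1 (min (2 ^ (j + 2) - 1) (2 ^ L)), x t * m (min (2 ^ (j + 2) - 1) (2 ^ L)) := by
  rw [← sum_mul, sum_Icc_xbar hxb hj, ← sum_Icc_min_of_eq_zero hx, ← sum_mul, mul_assoc]
  gcongr
  exact sum_nonneg fun t _ => hx0 t

theorem half_sum_mul_le_sum_mul_xbar (hx0 : ∀ t, 0 ≤ x t) (hx : ∀ t, 2 ^ L < t → x t = 0)
    {f : ℕ → ℝ} (hf : ∀ t ∈ Icc 1 (2 * 2 ^ L), ∀ t' ∈ Icc 1 (2 * 2 ^ L), t ≤ t' → f t' ≤ f t)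
    (hf12 : f 1 = f 2) :
    (1 / 2) * ∑ t ∈ Icc 1 (2 ^ L), f t * x t ≤ ∑ j ∈ Icc 0 L, f (2 ^ (j + 1)) * xb j := by
  have hfx : ∀ t, 2 ^ L < t → f t * x t = 0 := fun t ht => by rw [hx t ht, mul_zero]
  calc (1 / 2) * ∑ t ∈ Icc 1 (2 ^ L), f t * x t
      = (1 / 2) * ∑ j ∈ Icc 0 L, ∑ t ∈ block j, f t * x t := by
        rw [sum_Icc_sum_block, ← sum_Icc_min_of_eq_zero hfx 1 (2 ^ (L + 2) - 1),
          min_eq_right (two_pow_le_two_pow_add_two_sub_one L)]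
    _ ≤ (1 / 2) * ∑ j ∈ Icc 0 L, ∑ t ∈ block j, f (2 ^ (j + 1)) * x t := by
        refine mul_le_mul_of_nonneg_left (sum_le_sum fun j hj => sum_le_sum fun t ht => ?_)
          (by norm_num)
        by_cases htL : t ≤ 2 ^ L
        · exact mul_le_mul_of_nonneg_right
            (apply_le_apply_two_pow_of_mem_block hf hf12 (mem_Icc.mp hj).2 ht htL) (hx0 t)
        · rw [hx t (by omega), mul_zero, mul_zero]
    _ = ∑ j ∈ Icc 0 L, f (2 ^ (j + 1)) * xb j := by
        rw [mul_sum]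
        refine sum_congr rfl fun j hj => ?_
        rw [hxb j (mem_Icc.mp hj).2, ← mul_sum]
        ring

end Item

end DyadicGrouping

open DyadicGrouping

theorem stmt_0_general (n L B : ℕ) (hB : B = 2 ^ L)
    (ER m : ℕ → ℕ → ℝ)
    (hER_mono : ∀ i ∈ Icc 1 n, ∀ t ∈ Icc 1 (2 * B), ∀ t' ∈ Icc 1 (2 * B), t ≤ t' → ER i t' ≤ ER i t)
    (hER12 : ∀ i ∈ Icc 1 n, ER i 1 = ER i 2)
    (hm_mono : ∀ i ∈ Icc 1 n, ∀ t ∈ Icc 1 (2 * B), ∀ t' ∈ Icc 1 (2 * B), t ≤ t' → m i t ≤ m i t')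
    (hm_stable : ∀ i ∈ Icc 1 n, ∀ t ∈ Icc B (2 * B), m i t = m i B)
    (c : ℝ) (hc : 0 ≤ c)
    (x : ℕ → ℕ → ℝ)
    (hx01 : ∀ i ∈ Icc 1 n, ∀ t ∈ Icc 1 B, x i t ∈ Set.Icc (0 : ℝ) 1)
    (hxout : ∀ i ∈ Icc 1 n, ∀ t, t ∉ Icc 1 B → x i t = 0)
    (hxsum : ∀ i ∈ Icc 1 n, ∑ t ∈ Icc 1 B, x i t ≤ 1)
    (hxload : ∀ t ∈ Icc 1 B, ∑ i ∈ Icc 1 n, ∑ t' ∈ Icc 1 t, x i t' * m i t ≤ c * (t : ℝ))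
    (xbar : ℕ → ℕ → ℝ)
    (hxbar0 : ∀ i, xbar i 0 = x i 1 / 2 + (x i 2 + x i 3) / 2)
    (hxbarj : ∀ i, ∀ j, 1 ≤ j → j ≤ L →
      xbar i j = (1 / 2) * ∑ t ∈ Icc (2 ^ (j + 1)) (min (2 ^ (j + 2) - 1) B), x i t) :
    (∀ i ∈ Icc 1 n, ∀ j ∈ Icc 0 L, xbar i j ∈ Set.Icc (0 : ℝ) 1) ∧
    (∀ i ∈ Icc 1 n, ∑ j ∈ Icc 0 L, xbar i j ≤ 1) ∧
    (∀ j ∈ Icc 0 L, ∑ i ∈ Icc 1 n, ∑ j' ∈ Icc 0 j, xbar i j' * m i (2 ^ (j + 1))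
        ≤ 2 * c * (2 : ℝ) ^ j) ∧
    ((1 / 2) * ∑ i ∈ Icc 1 n, ∑ t ∈ Icc 1 B, ER i t * x i t
        ≤ ∑ i ∈ Icc 1 n, ∑ j ∈ Icc 0 L, ER i (2 ^ (j + 1)) * xbar i j) := by
  subst hB
  have hx0 : ∀ i ∈ Icc 1 n, ∀ t, 0 ≤ x i t := fun i hi t => by
    by_cases ht : t ∈ Icc 1 (2 ^ L)
    · exact (hx01 i hi t ht).1
    · rw [hxout i hi t ht]
  have hx : ∀ i ∈ Icc 1 n, ∀ t, 2 ^ L < t → x i t = 0 := fun i hi t ht =>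
    hxout i hi t fun h => (mem_Icc.mp h).2.not_gt ht
  have hxb : ∀ i ∈ Icc 1 n, ∀ j ≤ L, xbar i j = (1 / 2) * ∑ t ∈ block j, x i t :=
    fun i hi _ hj => xbar_eq_half_sum_block (hxbar0 i) (hxbarj i) (hx i hi) hj
  refine ⟨fun i hi j hj =>
      xbar_mem_Icc (hxb i hi) (hx0 i hi) (hx i hi) (hxsum i hi) (mem_Icc.mp hj).2,
    fun i hi => sum_xbar_le_one (hxb i hi) (hx i hi) (hxsum i hi), fun j hj => ?_, ?_⟩
  · have hjL := (mem_Icc.mp hj).2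
    calc ∑ i ∈ Icc 1 n, ∑ j' ∈ Icc 0 j, xbar i j' * m i (2 ^ (j + 1))
        ≤ ∑ i ∈ Icc 1 n, (1 / 2) * ∑ t ∈ Icc 1 (min (2 ^ (j + 2) - 1) (2 ^ L)),
            x i t * m i (min (2 ^ (j + 2) - 1) (2 ^ L)) :=
          sum_le_sum fun i hi => sum_xbar_mul_le (hxb i hi) (hx0 i hi) (hx i hi) hjL
            (apply_two_pow_le_apply_min (hm_mono i hi) (hm_stable i hi) hjL)
      _ ≤ (1 / 2) * (c * (4 * 2 ^ j)) := by
          rw [← mul_sum]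
          gcongr
          exact (hxload _ (min_two_pow_mem_Icc j L)).trans (by gcongr; exact cast_min_two_pow_le j L)
      _ = 2 * c * 2 ^ j := by ring
  · rw [mul_sum]
    exact sum_le_sum fun i hi => half_sum_mul_le_sum_mul_xbar (hxb i hi) (hx0 i hi) (hx i hi)
      (hER_mono i hi) (hER12 i hi)

/-- Grouping the time-indexed LP solution `x` into a
polynomial-size LP solution `x̄` loses at most a factor 2. -/
theorem stmt_0 (n L B : ℕ) (hB : B = 2 ^ L)
    (ER m : ℕ → ℕ → ℝ)
    (hER_nonneg : ∀ i ∈ Icc 1 n, ∀ t ∈ Icc 1 (2 * B), 0 ≤ ER i t)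
    (hER_mono : ∀ i ∈ Icc 1 n, ∀ t ∈ Icc 1 (2 * B), ∀ t' ∈ Icc 1 (2 * B), t ≤ t' → ER i t' ≤ ER i t)
    (hER12 : ∀ i ∈ Icc 1 n, ER i 1 = ER i 2)
    (hm_nonneg : ∀ i ∈ Icc 1 n, ∀ t ∈ Icc 1 (2 * B), 0 ≤ m i t)
    (hm_mono : ∀ i ∈ Icc 1 n, ∀ t ∈ Icc 1 (2 * B), ∀ t' ∈ Icc 1 (2 * B), t ≤ t' → m i t ≤ m i t')
    (hm_stable : ∀ i ∈ Icc 1 n, ∀ t ∈ Icc B (2 * B), m i t = m i B)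
    (c : ℝ) (hc : 0 ≤ c)
    (x : ℕ → ℕ → ℝ)
    (hx01 : ∀ i ∈ Icc 1 n, ∀ t ∈ Icc 1 B, x i t ∈ Set.Icc (0 : ℝ) 1)
    (hxout : ∀ i ∈ Icc 1 n, ∀ t, t ∉ Icc 1 B → x i t = 0)
    (hxsum : ∀ i ∈ Icc 1 n, ∑ t ∈ Icc 1 B, x i t ≤ 1)
    (hxload : ∀ t ∈ Icc 1 B, ∑ i ∈ Icc 1 n, ∑ t' ∈ Icc 1 t, x i t' * m i t ≤ c * (t : ℝ))
    (xbar : ℕ → ℕ → ℝ)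
    (hxbar0 : ∀ i, xbar i 0 = x i 1 / 2 + (x i 2 + x i 3) / 2)
    (hxbarj : ∀ i, ∀ j, 1 ≤ j → j ≤ L →
      xbar i j = (1 / 2) * ∑ t ∈ Icc (2 ^ (j + 1)) (min (2 ^ (j + 2) - 1) B), x i t) :
    (∀ i ∈ Icc 1 n, ∀ j ∈ Icc 0 L, xbar i j ∈ Set.Icc (0 : ℝ) 1) ∧
    (∀ i ∈ Icc 1 n, ∑ j ∈ Icc 0 L, xbar i j ≤ 1) ∧
    (∀ j ∈ Icc 0 L, ∑ i ∈ Icc 1 n, ∑ j' ∈ Icc 0 j, xbar i j' * m i (2 ^ (j + 1))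
        ≤ 2 * c * (2 : ℝ) ^ j) ∧
    ((1 / 2) * ∑ i ∈ Icc 1 n, ∑ t ∈ Icc 1 B, ER i t * x i t
        ≤ ∑ i ∈ Icc 1 n, ∑ j ∈ Icc 0 L, ER i (2 ^ (j + 1)) * xbar i j) :=
  stmt_0_general n L B hB ER m hER_mono hER12 hm_mono hm_stable c hc x hx01 hxout hxsum hxload xbar
    hxbar0 hxbarj
end

section
/- Suppose c' ≥ 0 and x̄ = (x̄_{i,2^j}) with x̄_{i,2^j} ∈ [0,1] for i ∈ {1,…,n}, j ∈ {0,…,L} satisfies: ∑_{j=0}^{L} x̄_{i,2^j} ≤ 1 for every i, and ∑_{i=1}^{n} ∑_{j'=0}^{j} x̄_{i,2^{j'}}·m_{i,2^{j+1}} ≤ c'·2^j for every j ∈ {0,…,L}. Define x̂_{i,t} = x̄_{i,2^j}/2^j for every j ∈ {0,…,L} and every t with 2^j ≤ t < 2^{j+1}. Then: each x̂_{i,t} ∈ [0,1]; ∑_{t=1}^{2B−1} x̂_{i,t} ≤ 1 for every i; ∑_{i=1}^{n} ∑_{t'=1}^{t} x̂_{i,t'}·m_{i,t} ≤ c'·t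 for every t ∈ {1,…,2B−1}; and ∑_{i=1}^{n} ∑_{t=1}^{2B−1} ER_{i,t}·x̂_{i,t} ≥ ∑_{i=1}^{n} ∑_{j=0}^{L} ER_{i,2^{j+1}}·x̄_{i,2^j}, i.e., the expanded solution x̂ is feasible (with the same constant c') and its objective value is at least as large as that of x̄. -/
open Finset

/-!
On the block `[2^j, 2^(j+1))` the expansion `x̂` spreads the mass `x̄_{i,2^j}` uniformly over
`2^j` time slots, so summing `x̂` over the block returns `x̄_{i,2^j}` and the prefix sums of `x̂`
up to `2^(j+1) - 1` are the prefix sums of `x̄` up to `j`. A prefix ending at `t` lies inside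
the prefix ending at `2^(j+1) - 1` with `j = ⌊log₂ t⌋`, and `m` is nondecreasing, so its load is
at most the `j`-th load constraint of `x̄`, which is `c'·2^j ≤ c'·t`. Since `ER` is nonincreasing,
every slot `t` of block `j` earns at least the reward `ER_{i,2^(j+1)}` charged to `x̄`.
-/

theorem Finset.sum_Ico_eq_sum_range_sum_Ico {M : Type*} [AddCommMonoid M] (f : ℕ → M)
    {a : ℕ → ℕ} (ha : Monotone a) (N : ℕ) :
    ∑ t ∈ Ico (a 0) (a N), f t = ∑ j ∈ range N, ∑ t ∈ Ico (a j) (a (j + 1)), f t := by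
  induction N with
  | zero => simp
  | succ N ih =>
    rw [sum_range_succ, ← ih, sum_Ico_consecutive f (ha (Nat.zero_le N)) (ha N.le_succ)]

theorem Finset.sum_Ico_one_two_pow_eq_sum_Icc_sum_Ico {M : Type*} [AddCommMonoid M]
    (f : ℕ → M) (K : ℕ) :
    ∑ t ∈ Ico 1 (2 ^ (K + 1)), f t = ∑ j ∈ Icc 0 K, ∑ t ∈ Ico (2 ^ j) (2 ^ (j + 1)), f t := by
  rw [← Nat.range_succ_eq_Icc_zero]
  exact sum_Ico_eq_sum_range_sum_Ico f (pow_right_mono₀ one_le_two) (K + 1)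

theorem card_Ico_two_pow (j : ℕ) : #(Ico (2 ^ j) (2 ^ (j + 1))) = 2 ^ j := by
  rw [Nat.card_Ico, pow_succ]
  omega

theorem log_two_le_of_mem_Ico {L t : ℕ} (ht : t ∈ Ico 1 (2 ^ (L + 1))) : Nat.log 2 t ≤ L := by
  rw [mem_Ico] at ht
  exact Nat.lt_succ_iff.mp (Nat.log_lt_of_lt_pow (by omega) ht.2)

def IsDyadicExpansion (L : ℕ) (x xhat : ℕ → ℝ) : Prop :=
  ∀ j ≤ L, ∀ t, 2 ^ j ≤ t → t < 2 ^ (j + 1) → xhat t = x j / 2 ^ j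

namespace IsDyadicExpansion

variable {L : ℕ} {x xhat : ℕ → ℝ}

theorem eq_div_of_mem_Ico (h : IsDyadicExpansion L x xhat) {t : ℕ}
    (ht : t ∈ Ico 1 (2 ^ (L + 1))) : xhat t = x (Nat.log 2 t) / 2 ^ Nat.log 2 t :=
  h _ (log_two_le_of_mem_Ico ht) t (Nat.pow_log_le_self 2 (by rw [mem_Ico] at ht; omega))
    (Nat.lt_pow_succ_log_self one_lt_two t)

theorem mem_Icc (h : IsDyadicExpansion L x xhat) (hx : ∀ j ≤ L, x j ∈ Set.Icc (0 : ℝ) 1)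
    {t : ℕ} (ht : t ∈ Ico 1 (2 ^ (L + 1))) : xhat t ∈ Set.Icc (0 : ℝ) 1 := by
  obtain ⟨hx0, hx1⟩ := hx _ (log_two_le_of_mem_Ico ht)
  rw [h.eq_div_of_mem_Ico ht]
  exact ⟨by positivity, div_le_one_of_le₀ (hx1.trans (one_le_pow₀ one_le_two)) (by positivity)⟩

theorem nonneg (h : IsDyadicExpansion L x xhat) (hx : ∀ j ≤ L, 0 ≤ x j) {t : ℕ}
    (ht : t ∈ Ico 1 (2 ^ (L + 1))) : 0 ≤ xhat t := by
  rw [h.eq_div_of_mem_Ico ht]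
  exact div_nonneg (hx _ (log_two_le_of_mem_Ico ht)) (by positivity)

theorem sum_Ico_two_pow (h : IsDyadicExpansion L x xhat) {j : ℕ} (hj : j ≤ L) :
    ∑ t ∈ Ico (2 ^ j) (2 ^ (j + 1)), xhat t = x j := by
  rw [sum_congr rfl fun t ht => h j hj t (mem_Ico.1 ht).1 (mem_Ico.1 ht).2, sum_const,
    card_Ico_two_pow, nsmul_eq_mul]
  push_cast
  field_simp

theorem sum_Ico_one_two_pow (h : IsDyadicExpansion L x xhat) {j : ℕ} (hj : j ≤ L) :
    ∑ t ∈ Ico 1 (2 ^ (j + 1)), xhat t = ∑ j' ∈ Icc 0 j, x j' := by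
  rw [sum_Ico_one_two_pow_eq_sum_Icc_sum_Ico]
  exact sum_congr rfl fun j' hj' => h.sum_Ico_two_pow ((Finset.mem_Icc.1 hj').2.trans hj)

theorem sum_Icc_mul_le (h : IsDyadicExpansion L x xhat) (hx : ∀ j ≤ L, 0 ≤ x j)
    {m : ℕ → ℝ} (hm : MonotoneOn m (Set.Icc 1 (2 ^ (L + 1)))) {t : ℕ}
    (ht : t ∈ Ico 1 (2 ^ (L + 1))) (hmt : 0 ≤ m t) :
    ∑ t' ∈ Icc 1 t, xhat t' * m t
      ≤ ∑ j' ∈ Icc 0 (Nat.log 2 t), x j' * m (2 ^ (Nat.log 2 t + 1)) := by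
  set j := Nat.log 2 t
  have hjL : j ≤ L := log_two_le_of_mem_Ico ht
  have htj : t < 2 ^ (j + 1) := Nat.lt_pow_succ_log_self one_lt_two t
  have hjL' : 2 ^ (j + 1) ≤ 2 ^ (L + 1) := Nat.pow_le_pow_right two_pos (by omega)
  have hprefix : ∑ t' ∈ Icc 1 t, xhat t' ≤ ∑ t' ∈ Ico 1 (2 ^ (j + 1)), xhat t' :=
    sum_le_sum_of_subset_of_nonneg (fun s hs => by simp at hs ⊢; omega)
      fun s hs _ => h.nonneg hx (by simp at hs ⊢; omega)
  have hmono : m t ≤ m (2 ^ (j + 1)) := by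
    rw [mem_Ico] at ht
    exact hm ⟨ht.1, by omega⟩ ⟨Nat.one_le_two_pow, hjL'⟩ htj.le
  have hsum0 : 0 ≤ ∑ t' ∈ Ico 1 (2 ^ (j + 1)), xhat t' :=
    sum_nonneg fun s hs => h.nonneg hx (by simp at hs ⊢; omega)
  rw [← sum_mul, ← sum_mul, ← h.sum_Ico_one_two_pow hjL]
  exact mul_le_mul hprefix hmono hmt hsum0

theorem sum_mul_le_sum_mul (h : IsDyadicExpansion L x xhat) (hx : ∀ j ≤ L, 0 ≤ x j)
    {R : ℕ → ℝ} (hR : AntitoneOn R (Set.Icc 1 (2 ^ (L + 1)))) :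
    ∑ j ∈ Icc 0 L, R (2 ^ (j + 1)) * x j ≤ ∑ t ∈ Ico 1 (2 ^ (L + 1)), R t * xhat t := by
  rw [sum_Ico_one_two_pow_eq_sum_Icc_sum_Ico]
  refine sum_le_sum fun j hj => ?_
  have hjL : j ≤ L := (Finset.mem_Icc.1 hj).2
  have hjL' : 2 ^ (j + 1) ≤ 2 ^ (L + 1) := Nat.pow_le_pow_right two_pos (by omega)
  have hj1 : 1 ≤ 2 ^ j := Nat.one_le_two_pow
  calc R (2 ^ (j + 1)) * x j = ∑ t ∈ Ico (2 ^ j) (2 ^ (j + 1)), R (2 ^ (j + 1)) * xhat t := by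
        rw [← mul_sum, h.sum_Ico_two_pow hjL]
    _ ≤ ∑ t ∈ Ico (2 ^ j) (2 ^ (j + 1)), R t * xhat t := by
        refine sum_le_sum fun t ht => mul_le_mul_of_nonneg_right ?_ ?_
        · rw [mem_Ico] at ht
          exact hR ⟨by omega, by omega⟩ ⟨Nat.one_le_two_pow, hjL'⟩ ht.2.le
        · exact h.nonneg hx (by simp at ht ⊢; omega)

end IsDyadicExpansion

theorem stmt_1_general (n L B : ℕ) (hB : B = 2 ^ L)
    (ER m : ℕ → ℕ → ℝ)
    (hER_mono : ∀ i ∈ Icc 1 n, ∀ t ∈ Icc 1 (2 * B), ∀ t' ∈ Icc 1 (2 * B), t ≤ t' → ER i t' ≤ ER i t)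
    (hm_nonneg : ∀ i ∈ Icc 1 n, ∀ t ∈ Icc 1 (2 * B), 0 ≤ m i t)
    (hm_mono : ∀ i ∈ Icc 1 n, ∀ t ∈ Icc 1 (2 * B), ∀ t' ∈ Icc 1 (2 * B), t ≤ t' → m i t ≤ m i t')
    (c' : ℝ) (hc' : 0 ≤ c')
    (xbar : ℕ → ℕ → ℝ)
    (hxbar01 : ∀ i ∈ Icc 1 n, ∀ j ∈ Icc 0 L, xbar i j ∈ Set.Icc (0 : ℝ) 1)
    (hxbarsum : ∀ i ∈ Icc 1 n, ∑ j ∈ Icc 0 L, xbar i j ≤ 1)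
    (hxbarload : ∀ j ∈ Icc 0 L, ∑ i ∈ Icc 1 n, ∑ j' ∈ Icc 0 j, xbar i j' * m i (2 ^ (j + 1))
        ≤ c' * (2 : ℝ) ^ j)
    (xhat : ℕ → ℕ → ℝ)
    (hxhat : ∀ i, ∀ j ≤ L, ∀ t, 2 ^ j ≤ t → t < 2 ^ (j + 1) → xhat i t = xbar i j / 2 ^ j) :
    (∀ i ∈ Icc 1 n, ∀ t ∈ Icc 1 (2 * B - 1), xhat i t ∈ Set.Icc (0 : ℝ) 1) ∧
    (∀ i ∈ Icc 1 n, ∑ t ∈ Icc 1 (2 * B - 1), xhat i t ≤ 1) ∧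
    (∀ t ∈ Icc 1 (2 * B - 1), ∑ i ∈ Icc 1 n, ∑ t' ∈ Icc 1 t, xhat i t' * m i t ≤ c' * (t : ℝ)) ∧
    (∑ i ∈ Icc 1 n, ∑ j ∈ Icc 0 L, ER i (2 ^ (j + 1)) * xbar i j
        ≤ ∑ i ∈ Icc 1 n, ∑ t ∈ Icc 1 (2 * B - 1), ER i t * xhat i t) := by
  have h2B : 2 * B = 2 ^ (L + 1) := by rw [hB, pow_succ, mul_comm]
  have hhorizon : Icc 1 (2 * B - 1) = Ico 1 (2 ^ (L + 1)) := by
    ext t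
    simp only [mem_Icc, mem_Ico, h2B]
    have : 1 ≤ 2 ^ (L + 1) := Nat.one_le_two_pow
    omega
  rw [hhorizon]
  rw [h2B] at hER_mono hm_nonneg hm_mono
  have hexp : ∀ i, IsDyadicExpansion L (xbar i) (xhat i) := hxhat
  have hx0 : ∀ i ∈ Icc 1 n, ∀ j ≤ L, 0 ≤ xbar i j := fun i hi j hj =>
    (hxbar01 i hi j (by simpa using hj)).1
  refine ⟨fun i hi t ht => (hexp i).mem_Icc (fun j hj => hxbar01 i hi j (by simpa using hj)) ht,
    fun i hi => (hexp i).sum_Ico_one_two_pow le_rfl ▸ hxbarsum i hi, fun t ht => ?_,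
    sum_le_sum fun i hi => (hexp i).sum_mul_le_sum_mul (hx0 i hi)
      fun a ha b hb => hER_mono i hi a (by simpa using ha) b (by simpa using hb)⟩
  have hlog : Nat.log 2 t ≤ L := log_two_le_of_mem_Ico ht
  calc ∑ i ∈ Icc 1 n, ∑ t' ∈ Icc 1 t, xhat i t' * m i t
      ≤ ∑ i ∈ Icc 1 n, ∑ j' ∈ Icc 0 (Nat.log 2 t), xbar i j' * m i (2 ^ (Nat.log 2 t + 1)) :=
        sum_le_sum fun i hi => (hexp i).sum_Icc_mul_le (hx0 i hi)
          (fun a ha b hb => hm_mono i hi a (by simpa using ha) b (by simpa using hb)) ht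
          (hm_nonneg i hi t (Ico_subset_Icc_self ht))
    _ ≤ c' * 2 ^ Nat.log 2 t := hxbarload _ (by simpa using hlog)
    _ ≤ c' * t := by
        gcongr
        exact_mod_cast Nat.pow_log_le_self 2 (by rw [mem_Ico] at ht; omega)

/-- Expanding the polynomial-size LP solution `x̄` back into a
time-indexed solution `x̂` preserves feasibility (with the same constant `c'`)
and does not decrease the objective value. -/
theorem stmt_1 (n L B : ℕ) (hB : B = 2 ^ L)
    (ER m : ℕ → ℕ → ℝ)
    (hER_nonneg : ∀ i ∈ Icc 1 n, ∀ t ∈ Icc 1 (2 * B), 0 ≤ ER i t)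
    (hER_mono : ∀ i ∈ Icc 1 n, ∀ t ∈ Icc 1 (2 * B), ∀ t' ∈ Icc 1 (2 * B), t ≤ t' → ER i t' ≤ ER i t)
    (hm_nonneg : ∀ i ∈ Icc 1 n, ∀ t ∈ Icc 1 (2 * B), 0 ≤ m i t)
    (hm_mono : ∀ i ∈ Icc 1 n, ∀ t ∈ Icc 1 (2 * B), ∀ t' ∈ Icc 1 (2 * B), t ≤ t' → m i t ≤ m i t')
    (c' : ℝ) (hc' : 0 ≤ c')
    (xbar : ℕ → ℕ → ℝ)
    (hxbar01 : ∀ i ∈ Icc 1 n, ∀ j ∈ Icc 0 L, xbar i j ∈ Set.Icc (0 : ℝ) 1)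
    (hxbarsum : ∀ i ∈ Icc 1 n, ∑ j ∈ Icc 0 L, xbar i j ≤ 1)
    (hxbarload : ∀ j ∈ Icc 0 L, ∑ i ∈ Icc 1 n, ∑ j' ∈ Icc 0 j, xbar i j' * m i (2 ^ (j + 1))
        ≤ c' * (2 : ℝ) ^ j)
    (xhat : ℕ → ℕ → ℝ)
    (hxhat : ∀ i, ∀ j ≤ L, ∀ t, 2 ^ j ≤ t → t < 2 ^ (j + 1) → xhat i t = xbar i j / 2 ^ j) :
    (∀ i ∈ Icc 1 n, ∀ t ∈ Icc 1 (2 * B - 1), xhat i t ∈ Set.Icc (0 : ℝ) 1) ∧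
    (∀ i ∈ Icc 1 n, ∑ t ∈ Icc 1 (2 * B - 1), xhat i t ≤ 1) ∧
    (∀ t ∈ Icc 1 (2 * B - 1), ∑ i ∈ Icc 1 n, ∑ t' ∈ Icc 1 t, xhat i t' * m i t ≤ c' * (t : ℝ)) ∧
    (∑ i ∈ Icc 1 n, ∑ j ∈ Icc 0 L, ER i (2 ^ (j + 1)) * xbar i j
        ≤ ∑ i ∈ Icc 1 n, ∑ t ∈ Icc 1 (2 * B - 1), ER i t * xhat i t) :=
  stmt_1_general n L B hB ER m hER_mono hm_nonneg hm_mono c' hc' xbar hxbar01 hxbarsum hxbarload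
    xhat hxhat
end

section
/- Let prob satisfy the preflow condition on a finite rooted tree T. Let X be an antichain in T and let Z ⊆ V be a set of vertices such that every x ∈ X has an ancestor belonging to Z. Then ∑_{z ∈ Z} prob(z) ≥ ∑_{x ∈ X} prob(x). -/
/-! Fix a vertex `z` and an antichain `X` of descendants of `z`. If `z ∈ X` then `X = {z}`;
otherwise every `x ∈ X` passes through exactly one child `c` of `z`, the part of `X` below `c`
is an antichain of descendants of `c`, and by induction on the height of the subtree
`∑_X prob ≤ ∑_c prob c ≤ prob z`. For a general cover `Z`, split `X` according to a chosen
ancestor in `Z`. -/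

open Finset

section

variable {V : Type*}

def IsAncestor (parent : V → V) (a b : V) : Prop := ∃ k : ℕ, parent^[k] b = a

theorem isAncestor_iterate (parent : V → V) (k : ℕ) (x : V) :
    IsAncestor parent (parent^[k] x) x :=
  ⟨k, rfl⟩

/-- The ancestor of `x` at depth `d`; `x` itself when `depth x ≤ d`. -/
def ancestorAt (parent : V → V) (depth : V → ℕ) (d : ℕ) (x : V) : V :=
  parent^[depth x - d] x

theorem parent_ancestorAt_succ {parent : V → V} {depth : V → ℕ} {d : ℕ} {x : V}
    (hd : d < depth x) :
    parent (ancestorAt parent depth (d + 1) x) = ancestorAt parent depth d x := by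
  rw [ancestorAt, ancestorAt, ← Function.iterate_succ_apply' parent]
  congr 1
  omega

structure IsTreeDepth (root : V) (parent : V → V) (depth : V → ℕ) : Prop where
  parent_root : parent root = root
  depth_root : depth root = 0
  depth_eq_depth_parent_add_one : ∀ u, u ≠ root → depth u = depth (parent u) + 1

namespace IsTreeDepth

variable {root : V} {parent : V → V} {depth : V → ℕ}

theorem eq_root_of_depth_eq_zero (h : IsTreeDepth root parent depth) {v : V}
    (hv : depth v = 0) : v = root := by
  by_contra hne
  have := h.depth_eq_depth_parent_add_one v hne
  omega

theorem depth_iterate (h : IsTreeDepth root parent depth) (k : ℕ) (x : V) :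
    depth (parent^[k] x) = depth x - k := by
  induction k with
  | zero => rfl
  | succ k ih =>
    rw [Function.iterate_succ_apply']
    by_cases hroot : parent^[k] x = root
    · rw [hroot, h.parent_root, h.depth_root]
      rw [hroot, h.depth_root] at ih
      omega
    · have := h.depth_eq_depth_parent_add_one _ hroot
      omega

theorem iterate_eq_root (h : IsTreeDepth root parent depth) {k : ℕ} {x : V}
    (hk : depth x ≤ k) : parent^[k] x = root :=
  h.eq_root_of_depth_eq_zero (by rw [h.depth_iterate]; omega)

theorem depth_le_of_isAncestor (h : IsTreeDepth root parent depth) {z x : V}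
    (hzx : IsAncestor parent z x) : depth z ≤ depth x := by
  obtain ⟨k, rfl⟩ := hzx
  rw [h.depth_iterate]
  omega

theorem depth_ancestorAt (h : IsTreeDepth root parent depth) {d : ℕ} {x : V}
    (hd : d ≤ depth x) : depth (ancestorAt parent depth d x) = d := by
  rw [ancestorAt, h.depth_iterate]
  omega

theorem ancestorAt_depth_of_isAncestor (h : IsTreeDepth root parent depth) {z x : V}
    (hzx : IsAncestor parent z x) : ancestorAt parent depth (depth z) x = z := by
  obtain ⟨k, rfl⟩ := hzx
  rw [ancestorAt, h.depth_iterate]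
  rcases le_or_gt k (depth x) with hk | hk
  · congr 1
    omega
  · rw [h.iterate_eq_root hk.le, h.iterate_eq_root (by omega)]

theorem depth_lt_of_isAncestor (h : IsTreeDepth root parent depth) {z x : V}
    (hzx : IsAncestor parent z x) (hne : x ≠ z) : depth z < depth x := by
  refine lt_of_le_of_ne (h.depth_le_of_isAncestor hzx) fun hd => hne ?_
  have := h.ancestorAt_depth_of_isAncestor hzx
  rwa [ancestorAt, hd, Nat.sub_self, Function.iterate_zero_apply] at this

variable [Fintype V] [DecidableEq V] {prob : V → ℝ}

theorem sum_le_of_isAncestor_of_depth_lt (h : IsTreeDepth root parent depth)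
    (hprob_nonneg : ∀ u, 0 ≤ prob u)
    (hpreflow : ∀ v, ∑ u ∈ univ.filter (fun u => u ≠ root ∧ parent u = v), prob u ≤ prob v)
    (n : ℕ) {X : Finset V} (hanti : IsAntichain (IsAncestor parent) (X : Set V)) {z : V}
    (hz : ∀ x ∈ X, IsAncestor parent z x) (hn : ∀ x ∈ X, depth x < depth z + n) :
    ∑ x ∈ X, prob x ≤ prob z := by
  induction n generalizing X z with
  | zero =>
    have hX : X = ∅ := eq_empty_of_forall_notMem fun x hx =>
      (hn x hx).not_ge (by simpa using h.depth_le_of_isAncestor (hz x hx))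
    simpa [hX] using hprob_nonneg z
  | succ n ih =>
    by_cases hzX : z ∈ X
    · have hX : X = {z} := eq_singleton_iff_unique_mem.2
        ⟨hzX, fun x hx => by_contra fun hne => hanti hzX hx (Ne.symm hne) (hz x hx)⟩
      simp [hX]
    have hdepth_lt : ∀ x ∈ X, depth z < depth x := fun x hx =>
      h.depth_lt_of_isAncestor (hz x hx) (ne_of_mem_of_not_mem hx hzX)
    set child := ancestorAt parent depth (depth z + 1)
    have hchild : ∀ x ∈ X, child x ∈ univ.filter (fun u => u ≠ root ∧ parent u = z) := by
      intro x hx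
      refine mem_filter.2 ⟨mem_univ _, fun hroot => ?_, ?_⟩
      · have : depth (child x) = depth z + 1 := h.depth_ancestorAt (hdepth_lt x hx)
        rw [hroot, h.depth_root] at this
        omega
      · show parent (ancestorAt parent depth (depth z + 1) x) = z
        rw [parent_ancestorAt_succ (parent := parent) (hdepth_lt x hx),
          h.ancestorAt_depth_of_isAncestor (hz x hx)]
    calc ∑ x ∈ X, prob x
        = ∑ c ∈ univ.filter (fun u => u ≠ root ∧ parent u = z),
            ∑ x ∈ X with child x = c, prob x := (sum_fiberwise_of_maps_to hchild prob).symm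
      _ ≤ ∑ c ∈ univ.filter (fun u => u ≠ root ∧ parent u = z), prob c := by
        refine sum_le_sum fun c hc =>
          ih (hanti.subset (coe_subset.2 (filter_subset _ _))) ?_ ?_
        · intro x hx
          obtain ⟨-, rfl⟩ := mem_filter.1 hx
          exact isAncestor_iterate parent _ x
        · obtain ⟨-, hc_root, rfl⟩ := mem_filter.1 hc
          have := h.depth_eq_depth_parent_add_one c hc_root
          intro x hx
          have := hn x (mem_filter.1 hx).1
          omega
      _ ≤ prob z := hpreflow z

theorem sum_le_of_isAncestor (h : IsTreeDepth root parent depth)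
    (hprob_nonneg : ∀ u, 0 ≤ prob u)
    (hpreflow : ∀ v, ∑ u ∈ univ.filter (fun u => u ≠ root ∧ parent u = v), prob u ≤ prob v)
    {X : Finset V} (hanti : IsAntichain (IsAncestor parent) (X : Set V)) {z : V}
    (hz : ∀ x ∈ X, IsAncestor parent z x) :
    ∑ x ∈ X, prob x ≤ prob z :=
  h.sum_le_of_isAncestor_of_depth_lt hprob_nonneg hpreflow (X.sup depth + 1) hanti hz
    fun x hx => by have := le_sup (f := depth) hx; omega

end IsTreeDepth

end

/-- (Observation: tree preflow, second form.) If `prob`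
satisfies the preflow condition on a finite rooted tree, `X` is an antichain
and every element of `X` has an ancestor in `Z`, then
`∑_{z ∈ Z} prob z ≥ ∑_{x ∈ X} prob x`. -/
theorem stmt_3 {V : Type*} [Fintype V] [DecidableEq V]
    (root : V) (parent : V → V) (depth : V → ℕ)
    (hroot : parent root = root)
    (hdepth_root : depth root = 0)
    (hdepth : ∀ u, u ≠ root → depth u = depth (parent u) + 1)
    (prob : V → ℝ) (hprob_nonneg : ∀ u, 0 ≤ prob u)
    (hpreflow : ∀ v, ∑ u ∈ univ.filter (fun u => u ≠ root ∧ parent u = v), prob u ≤ prob v)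
    (X : Finset V)
    (hanti : ∀ x ∈ X, ∀ y ∈ X, x ≠ y → ¬ (∃ k : ℕ, parent^[k] y = x))
    (Z : Finset V) (hZ : ∀ x ∈ X, ∃ z ∈ Z, ∃ k : ℕ, parent^[k] x = z) :
    ∑ x ∈ X, prob x ≤ ∑ z ∈ Z, prob z := by
  have htree : IsTreeDepth root parent depth := ⟨hroot, hdepth_root, hdepth⟩
  have hanti' : IsAntichain (IsAncestor parent) (X : Set V) := hanti
  choose! g hgZ hg using hZ
  calc ∑ x ∈ X, prob x = ∑ z ∈ Z, ∑ x ∈ X with g x = z, prob x :=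
        (sum_fiberwise_of_maps_to hgZ prob).symm
    _ ≤ ∑ z ∈ Z, prob z := by
      refine sum_le_sum fun z _ => htree.sum_le_of_isAncestor hprob_nonneg hpreflow
        (hanti'.subset (coe_subset.2 (filter_subset _ _))) ?_
      intro x hx
      obtain ⟨hxX, rfl⟩ := mem_filter.1 hx
      exact hg x hxX
end

section
/- Suppose (z, w) satisfies (C1)–(C3). Then there exists a finite collection of strategy forests {(time(i,j,·), prob(i,j,·))}_j, with at most B·|S_i| forests for each arm i, such that for every state u ∈ S_i and every t ∈ {1,…,B}, z_{u,t} = ∑_{j : time(i,j,u) = t} prob(i,j,u). Consequently, ∑_{(i,j,u) : time(i,j,u) = t} prob(i,j,u) ≤ 1 for every t ∈ {1,…,B}. -/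
/-!
Let `π u` be the product of the transition probabilities along the path from the root to `u`,
and `Z u t = ∑_{t' ≤ t} z u t'`. Constraints (C1)–(C2) give
`Z u t ≤ p u * Z (parent u) (t - 1)`, so for every level `θ > 0`, playing each state `u` at the
first time at which `Z u t ≥ θ * π u` (and never if there is none) is a strategy forest whose
probabilities are proportional to `π`. For arm `i`, sort the positive values of `Z u t / π u` as
`0 = b₀ < b₁ < ⋯ < b_K` with `K ≤ B * |S_i|`, and give the forest cut at level `b_{j+1}` the
weight `b_{j+1} - b_j`. The probability with which these forests play `u` by time `t` then
telescopes to `Z u t`, so their marginals reproduce `z`, and the last claim is (C3).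
-/

open Finset

/-- A strategy forest for arm `i`: an assignment of times (in `{1,…,B} ∪ {∞}`)
and play probabilities to the states of arm `i` such that times strictly
increase along tree edges and probabilities follow the transition
probabilities. -/
def IsStrategyForest {S : Type*} {n : ℕ} (B : ℕ) (arm : S → Fin n) (ρ : Fin n → S)
    (parent : S → S) (p : S → ℝ) (i : Fin n)
    (time : S → WithTop ℕ) (prob : S → ℝ) : Prop :=
  (∀ u, arm u = i → 0 ≤ prob u) ∧
  (∀ u, arm u = i → time u ≠ ⊤ → 1 ≤ time u ∧ time u ≤ (B : WithTop ℕ)) ∧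
  (∀ u, arm u = i → u ≠ ρ i →
    (time (parent u) = ⊤ → time u = ⊤) ∧
    (time u ≠ ⊤ → time (parent u) + 1 ≤ time u) ∧
    (time u ≠ ⊤ → prob u = p u * prob (parent u)) ∧
    (time u = ⊤ → prob u = 0))

noncomputable def layer (s : Finset ℝ) : ℕ → ℝ
  | 0 => 0
  | j + 1 => if h : j < #s then s.orderEmbOfFin rfl ⟨j, h⟩ else 0

section Layer

variable {s : Finset ℝ}

@[simp] theorem layer_zero : layer s 0 = 0 := rfl

theorem layer_lt_layer (hs : ∀ x ∈ s, 0 < x) {j k : ℕ} (hjk : j < k) (hk : k ≤ #s) :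
    layer s j < layer s k := by
  obtain ⟨k, rfl⟩ : ∃ k', k = k' + 1 := ⟨k - 1, by omega⟩
  have hk' : k < #s := hk
  cases j with
  | zero => simpa [layer, hk'] using hs _ (s.orderEmbOfFin_mem rfl _)
  | succ j =>
    simp only [layer, dif_pos hk', dif_pos (show j < #s by omega)]
    exact (s.orderEmbOfFin rfl).strictMono (Fin.mk_lt_mk.mpr (by omega))

theorem exists_layer_eq {x : ℝ} (hx : x ∈ insert 0 s) : ∃ m ≤ #s, layer s m = x := by
  rcases mem_insert.mp hx with rfl | hx
  · exact ⟨0, Nat.zero_le _, rfl⟩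
  · rw [← mem_coe, ← s.range_orderEmbOfFin rfl] at hx
    obtain ⟨⟨j, hj⟩, rfl⟩ := hx
    exact ⟨j + 1, hj, by simp [layer, hj]⟩

theorem layer_succ_pos (hs : ∀ x ∈ s, 0 < x) {j : ℕ} (hj : j < #s) : 0 < layer s (j + 1) :=
  layer_zero (s := s) ▸ layer_lt_layer hs j.succ_pos hj

theorem sum_layer_sub_of_mem_insert (hs : ∀ x ∈ s, 0 < x) {x : ℝ} (hx : x ∈ insert 0 s) :
    ∑ j ∈ (range #s).filter (fun j => layer s (j + 1) ≤ x), (layer s (j + 1) - layer s j) =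
      x := by
  obtain ⟨m, hm, rfl⟩ := exists_layer_eq hx
  have hfilter : (range #s).filter (fun j => layer s (j + 1) ≤ layer s m) = range m := by
    ext j
    simp only [mem_filter, mem_range]
    constructor
    · rintro ⟨hj, hle⟩
      by_contra! hmj
      exact (layer_lt_layer hs (by omega : m < j + 1) hj).not_ge hle
    · intro hj
      refine ⟨by omega, ?_⟩
      rcases (show j + 1 ≤ m by omega).eq_or_lt with h | h
      · rw [h]
      · exact (layer_lt_layer hs h hm).le
  rw [hfilter, sum_range_sub, layer_zero, sub_zero]

end Layer

def cumSum (f : ℕ → ℝ) (t : ℕ) : ℝ := ∑ s ∈ Icc 1 t, f s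

section CumSum

variable {f : ℕ → ℝ}

@[simp] theorem cumSum_zero : cumSum f 0 = 0 := by simp [cumSum]

theorem cumSum_succ (t : ℕ) : cumSum f (t + 1) = cumSum f t + f (t + 1) :=
  sum_Icc_succ_top (by omega) f

theorem monotone_cumSum (hf : ∀ t, 0 ≤ f t) : Monotone (cumSum f) :=
  monotone_nat_of_le_succ fun t => by rw [cumSum_succ]; linarith [hf (t + 1)]

theorem cumSum_nonneg (hf : ∀ t, 0 ≤ f t) (t : ℕ) : 0 ≤ cumSum f t :=
  cumSum_zero (f := f) ▸ monotone_cumSum hf (Nat.zero_le t)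

theorem cumSum_sub_cumSum_pred {t : ℕ} (ht : 1 ≤ t) : cumSum f t - cumSum f (t - 1) = f t := by
  obtain ⟨t, rfl⟩ : ∃ t', t = t' + 1 := ⟨t - 1, by omega⟩
  rw [Nat.add_sub_cancel, cumSum_succ]
  ring

theorem cumSum_eq_mul_cumSum_pred {w z : ℕ → ℝ} {q : ℝ} {B : ℕ} (hw1 : w 1 = 0)
    (hw : ∀ t ∈ Icc 2 B, w t = z (t - 1) * q) :
    ∀ t ≤ B, cumSum w t = q * cumSum z (t - 1)
  | 0, _ => by simp
  | 1, _ => by simp [cumSum, hw1]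
  | t + 2, ht => by
    rw [cumSum_succ, cumSum_eq_mul_cumSum_pred hw1 hw (t + 1) (by omega),
      hw (t + 2) (mem_Icc.mpr ⟨by omega, ht⟩), Nat.add_sub_cancel,
      show t + 2 - 1 = t + 1 from rfl, cumSum_succ]
    ring

end CumSum

def pathProb {S : Type*} (parent : S → S) (depth : S → ℕ) (p : S → ℝ) (u : S) : ℝ :=
  ∏ m ∈ range (depth u), p (parent^[m] u)

section PathProb

variable {S : Type*} {parent : S → S} {depth : S → ℕ} {p : S → ℝ}

theorem pathProb_nonneg (hp : ∀ u, 0 ≤ p u) (u : S) : 0 ≤ pathProb parent depth p u :=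
  prod_nonneg fun _ _ => hp _

theorem pathProb_eq_mul_parent {u : S} (hu : depth u = depth (parent u) + 1) :
    pathProb parent depth p u = p u * pathProb parent depth p (parent u) := by
  simp only [pathProb, hu, prod_range_succ', Function.iterate_succ_apply,
    Function.iterate_zero_apply]
  ring

end PathProb

theorem sum_filter_eq_coe_eq_sub {ι : Type*} (s : Finset ι) (T : ι → WithTop ℕ) (f : ι → ℝ)
    {t : ℕ} (ht : 1 ≤ t) :
    ∑ j ∈ s.filter (fun j => T j = t), f j =
      ∑ j ∈ s.filter (fun j => T j ≤ t), f j -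
        ∑ j ∈ s.filter (fun j => T j ≤ (t - 1 : ℕ)), f j := by
  rw [sum_filter, sum_filter, sum_filter, ← sum_sub_distrib]
  refine sum_congr rfl fun j _ => ?_
  by_cases htop : T j = ⊤
  · simp [htop]
  · obtain ⟨k, hk⟩ := WithTop.ne_top_iff_exists.mp htop
    rw [← hk]
    simp only [Nat.cast_withTop, WithTop.coe_eq_coe, WithTop.coe_le_coe]
    split_ifs <;> first | omega | ring

section Threshold

variable {S : Type*} (B : ℕ) (π : S → ℝ) (Z : S → ℕ → ℝ)

noncomputable def thresholdTime (θ : ℝ) (u : S) : WithTop ℕ :=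
  -- without the guard, a state with `π u = 0` would satisfy `θ * π u ≤ Z u t` at time 1
  if 0 < π u then ((Icc 1 B).filter fun t => θ * π u ≤ Z u t).min else ⊤

noncomputable def thresholdProb (θ w : ℝ) (u : S) : ℝ :=
  if thresholdTime B π Z θ u = ⊤ then 0 else w * π u

variable {B π Z} {θ : ℝ} {u : S}

theorem exists_thresholdTime_eq (h : thresholdTime B π Z θ u ≠ ⊤) :
    0 < π u ∧ ∃ t ∈ Icc 1 B, thresholdTime B π Z θ u = t ∧ θ * π u ≤ Z u t := by
  unfold thresholdTime at h ⊢
  split_ifs at h ⊢ with hπ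
  · obtain ⟨t, ht⟩ := WithTop.ne_top_iff_exists.mp h
    have hmem := mem_filter.mp (mem_of_min ht.symm)
    exact ⟨hπ, t, hmem.1, ht.symm, hmem.2⟩
  · exact absurd rfl h

theorem thresholdTime_le_coe_iff (hθ : 0 < θ) (hπ : 0 < π u) (hZ0 : Z u 0 = 0)
    (hZ : Monotone (Z u)) {t : ℕ} (ht : t ≤ B) :
    thresholdTime B π Z θ u ≤ t ↔ θ * π u ≤ Z u t := by
  constructor
  · intro hle
    obtain ⟨-, s, -, hs, hθs⟩ := exists_thresholdTime_eq (ne_top_of_le_ne_top (by simp) hle)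
    rw [hs, Nat.cast_le] at hle
    exact hθs.trans (hZ hle)
  · intro hθt
    have ht1 : 1 ≤ t := by
      by_contra! ht0
      rw [Nat.lt_one_iff.mp ht0, hZ0] at hθt
      exact (mul_pos hθ hπ).not_ge hθt
    rw [thresholdTime, if_pos hπ]
    exact min_le (mem_filter.mpr ⟨mem_Icc.mpr ⟨ht1, ht⟩, hθt⟩)

variable {n : ℕ} {arm : S → Fin n} {ρ : Fin n → S} {parent : S → S} {p : S → ℝ}

theorem thresholdTime_parent_add_one_le (hθ : 0 < θ) (hπ : ∀ u, 0 ≤ π u)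
    (hπu : π u = p u * π (parent u)) (hZ0 : ∀ u, Z u 0 = 0) (hZ : ∀ u, Monotone (Z u))
    (hZu : ∀ t ∈ Icc 1 B, Z u t ≤ p u * Z (parent u) (t - 1))
    (h : thresholdTime B π Z θ u ≠ ⊤) :
    thresholdTime B π Z θ (parent u) + 1 ≤ thresholdTime B π Z θ u := by
  obtain ⟨hπpos, t, ht, htime, hθt⟩ := exists_thresholdTime_eq h
  obtain ⟨ht1, htB⟩ := mem_Icc.mp ht
  have hpos : 0 < p u ∧ 0 < π (parent u) := by
    rcases pos_and_pos_or_neg_and_neg_of_mul_pos (hπu ▸ hπpos) with h | h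
    · exact h
    · exact absurd (hπ _) h.2.not_ge
  have hparent : θ * π (parent u) ≤ Z (parent u) (t - 1) := by
    refine le_of_mul_le_mul_left ?_ hpos.1
    calc p u * (θ * π (parent u)) = θ * π u := by rw [hπu]; ring
      _ ≤ Z u t := hθt
      _ ≤ p u * Z (parent u) (t - 1) := hZu t ht
  have hle :=
    (thresholdTime_le_coe_iff (B := B) hθ hpos.2 (hZ0 _) (hZ _) (by omega)).mpr hparent
  calc thresholdTime B π Z θ (parent u) + 1 ≤ ((t - 1 : ℕ) : WithTop ℕ) + 1 := by gcongr
    _ = thresholdTime B π Z θ u := by rw [htime, ← Nat.cast_add_one, Nat.sub_add_cancel ht1]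

theorem isStrategyForest_threshold (hθ : 0 < θ) {w : ℝ} (hw : 0 ≤ w) (hπ : ∀ u, 0 ≤ π u)
    (hπ_step : ∀ u, u ≠ ρ (arm u) → π u = p u * π (parent u))
    (hZ0 : ∀ u, Z u 0 = 0) (hZ : ∀ u, Monotone (Z u))
    (hZ_step : ∀ u, u ≠ ρ (arm u) → ∀ t ∈ Icc 1 B, Z u t ≤ p u * Z (parent u) (t - 1))
    (i : Fin n) :
    IsStrategyForest B arm ρ parent p i (thresholdTime B π Z θ) (thresholdProb B π Z θ w) := by
  refine ⟨fun u _ => ?_, fun u _ h => ?_, fun u hi hu => ?_⟩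
  · unfold thresholdProb
    split_ifs
    exacts [le_rfl, mul_nonneg hw (hπ u)]
  · obtain ⟨-, t, ht, htime, -⟩ := exists_thresholdTime_eq h
    rw [htime]
    exact ⟨WithTop.coe_le_coe.mpr (mem_Icc.mp ht).1, WithTop.coe_le_coe.mpr (mem_Icc.mp ht).2⟩
  have hu : u ≠ ρ (arm u) := hi ▸ hu
  have hparent := fun h => thresholdTime_parent_add_one_le (p := p) hθ hπ (hπ_step u hu) hZ0 hZ
    (hZ_step u hu) h
  have hparent_ne_top (h : thresholdTime B π Z θ u ≠ ⊤) :
      thresholdTime B π Z θ (parent u) ≠ ⊤ := by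
    intro htop
    have := hparent h
    rw [htop, WithTop.top_add, top_le_iff] at this
    exact h this
  refine ⟨fun h => by_contra fun h' => hparent_ne_top h' h, hparent, fun h => ?_,
    fun h => by simp [thresholdProb, h]⟩
  simp only [thresholdProb, if_neg h, if_neg (hparent_ne_top h), hπ_step u hu]
  ring

end Threshold

section ThresholdLayers

variable {S : Type*} {B : ℕ} {π : S → ℝ} {Z : S → ℕ → ℝ} {s : Finset ℝ} {u : S}

theorem sum_thresholdProb_layer_of_time_le (hs : ∀ x ∈ s, 0 < x) (hπ : 0 ≤ π u)
    (hZ0 : Z u 0 = 0) (hZ : Monotone (Z u)) {t : ℕ} (ht : t ≤ B) (hπZ : π u = 0 → Z u t = 0)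
    (hmem : Z u t / π u ∈ insert 0 s) :
    ∑ j ∈ (range #s).filter (fun j => thresholdTime B π Z (layer s (j + 1)) u ≤ t),
      thresholdProb B π Z (layer s (j + 1)) (layer s (j + 1) - layer s j) u = Z u t := by
  rcases hπ.eq_or_lt with h0 | hpos
  · simp [thresholdTime, ← h0, hπZ h0.symm]
  calc _ = ∑ j ∈ (range #s).filter (fun j => layer s (j + 1) ≤ Z u t / π u),
        (layer s (j + 1) - layer s j) * π u := by
        rw [sum_filter, sum_filter]
        refine sum_congr rfl fun j hj => ?_
        have hθ := layer_succ_pos hs (mem_range.mp hj)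
        have hiff := (thresholdTime_le_coe_iff hθ hpos hZ0 hZ ht).trans (le_div_iff₀ hpos).symm
        by_cases hle : thresholdTime B π Z (layer s (j + 1)) u ≤ t
        · rw [if_pos hle, if_pos (hiff.mp hle), thresholdProb,
            if_neg (ne_top_of_le_ne_top (WithTop.natCast_ne_top t) hle)]
        · rw [if_neg hle, if_neg (mt hiff.mpr hle)]
    _ = Z u t / π u * π u := by rw [← sum_mul, sum_layer_sub_of_mem_insert hs hmem]
    _ = Z u t := div_mul_cancel₀ _ hpos.ne'

theorem sum_thresholdProb_layer_of_time_eq (hs : ∀ x ∈ s, 0 < x) (hπ : 0 ≤ π u)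
    (hZ0 : Z u 0 = 0) (hZ : Monotone (Z u)) (hπZ : π u = 0 → ∀ t ≤ B, Z u t = 0)
    (hmem : ∀ t ≤ B, Z u t / π u ∈ insert 0 s) {t : ℕ} (ht : t ∈ Icc 1 B) :
    ∑ j ∈ (range #s).filter (fun j => thresholdTime B π Z (layer s (j + 1)) u = t),
      thresholdProb B π Z (layer s (j + 1)) (layer s (j + 1) - layer s j) u =
      Z u t - Z u (t - 1) := by
  obtain ⟨ht1, htB⟩ := mem_Icc.mp ht
  rw [sum_filter_eq_coe_eq_sub _ _ _ ht1,
    sum_thresholdProb_layer_of_time_le hs hπ hZ0 hZ htB (hπZ · t htB) (hmem t htB),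
    sum_thresholdProb_layer_of_time_le hs hπ hZ0 hZ (by omega) (hπZ · _ (by omega))
      (hmem _ (by omega))]

end ThresholdLayers

section Tree

variable {S : Type*} {n : ℕ} {arm : S → Fin n} {ρ : Fin n → S} {parent : S → S}
  {depth : S → ℕ} {p : S → ℝ} {B : ℕ} {Z : S → ℕ → ℝ}

theorem eq_zero_of_pathProb_eq_zero (hdepth_root : ∀ i, depth (ρ i) = 0)
    (hdepth : ∀ u, u ≠ ρ (arm u) → depth u = depth (parent u) + 1)
    (hZ_nonneg : ∀ u t, 0 ≤ Z u t) (hZ0 : ∀ u, Z u 0 = 0)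
    (hZ_step : ∀ u, u ≠ ρ (arm u) → ∀ t ∈ Icc 1 B, Z u t ≤ p u * Z (parent u) (t - 1)) :
    ∀ d u, depth u = d → pathProb parent depth p u = 0 → ∀ t ≤ B, Z u t = 0
  | 0, u, hd, hπ, _, _ => by simp [pathProb, hd] at hπ
  | d + 1, u, hd, hπ, t, ht => by
    have hu : u ≠ ρ (arm u) := fun h => by rw [h, hdepth_root] at hd; omega
    rcases Nat.eq_zero_or_pos t with rfl | ht1
    · exact hZ0 u
    have hZ_parent : p u * Z (parent u) (t - 1) = 0 := by
      rcases mul_eq_zero.mp (pathProb_eq_mul_parent (hdepth u hu) ▸ hπ) with h | h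
      · rw [h, zero_mul]
      · rw [eq_zero_of_pathProb_eq_zero hdepth_root hdepth hZ_nonneg hZ0 hZ_step d (parent u)
          (by rw [hdepth u hu] at hd; omega) h (t - 1) (by omega), mul_zero]
    exact le_antisymm (hZ_parent ▸ hZ_step u hu t (mem_Icc.mpr ⟨ht1, ht⟩)) (hZ_nonneg u t)

end Tree

section Breakpoints

variable {S : Type*} [Fintype S] {n : ℕ} (B : ℕ) (arm : S → Fin n) (π : S → ℝ)
  (Z : S → ℕ → ℝ)

noncomputable def breakpoints (i : Fin n) : Finset ℝ :=
  ((({u | arm u = i} : Finset S) ×ˢ Icc 1 B).image fun q => Z q.1 q.2 / π q.1).filter (0 < ·)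

variable {B arm π Z}

theorem card_breakpoints_le (i : Fin n) :
    #(breakpoints B arm π Z i) ≤ B * #({u | arm u = i} : Finset S) :=
  calc _ ≤ #(({u | arm u = i} : Finset S) ×ˢ Icc 1 B) :=
        (card_filter_le _ _).trans card_image_le
    _ = B * #({u | arm u = i} : Finset S) := by rw [card_product, Nat.card_Icc, mul_comm]; rfl

theorem div_mem_insert_breakpoints {u : S} (hZ0 : Z u 0 = 0) {t : ℕ} (ht : t ≤ B)
    (hnonneg : 0 ≤ Z u t / π u) :
    Z u t / π u ∈ insert 0 (breakpoints B arm π Z (arm u)) := by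
  rcases hnonneg.eq_or_lt with h | h
  · exact h ▸ mem_insert_self _ _
  rcases Nat.eq_zero_or_pos t with rfl | ht1
  · simp [hZ0] at h
  refine mem_insert_of_mem (mem_filter.mpr ⟨mem_image.mpr ⟨(u, t), ?_, rfl⟩, h⟩)
  simpa [ht] using Nat.succ_le_of_lt ht1

theorem pos_of_mem_breakpoints {i : Fin n} :
    ∀ x ∈ breakpoints B arm π Z i, 0 < x :=
  fun _ hx => (mem_filter.mp hx).2

end Breakpoints

theorem stmt_5_general {S : Type*} [Fintype S] {n : ℕ}
    (B : ℕ)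
    (arm : S → Fin n) (ρ : Fin n → S) (parent : S → S) (depth : S → ℕ) (p : S → ℝ)
    (hdepth_root : ∀ i, depth (ρ i) = 0)
    (hdepth : ∀ u, u ≠ ρ (arm u) → depth u = depth (parent u) + 1)
    (hp : ∀ u, 0 ≤ p u ∧ p u ≤ 1)
    (z w : S → ℕ → ℝ)
    (hznn : ∀ u t, 0 ≤ z u t)
    (hC1 : ∀ u : S, u ≠ ρ (arm u) →
      w u 1 = 0 ∧ ∀ t ∈ Icc 2 B, w u t = z (parent u) (t - 1) * p u)
    (hC2 : ∀ u : S, ∀ t ∈ Icc 1 B, ∑ t' ∈ Icc 1 t, z u t' ≤ ∑ t' ∈ Icc 1 t, w u t')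
    (hC3 : ∀ t ∈ Icc 1 B, ∑ u : S, z u t ≤ 1) :
    ∃ (J : Fin n → ℕ) (time : Fin n → ℕ → S → WithTop ℕ) (prob : Fin n → ℕ → S → ℝ),
      (∀ i, J i ≤ B * (univ.filter (fun u => arm u = i)).card) ∧
      (∀ i, ∀ j < J i, IsStrategyForest B arm ρ parent p i (time i j) (prob i j)) ∧
      (∀ u : S, ∀ t ∈ Icc 1 B,
        z u t = ∑ j ∈ (range (J (arm u))).filter
          (fun j => time (arm u) j u = (t : WithTop ℕ)), prob (arm u) j u) ∧
      (∀ t ∈ Icc 1 B,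
        ∑ u : S, ∑ j ∈ (range (J (arm u))).filter
          (fun j => time (arm u) j u = (t : WithTop ℕ)), prob (arm u) j u ≤ 1) := by
  set π := pathProb parent depth p
  set Z : S → ℕ → ℝ := fun u => cumSum (z u)
  set F := breakpoints B arm π Z
  have hπ : ∀ u, 0 ≤ π u := pathProb_nonneg fun u => (hp u).1
  have hZ : ∀ u, Monotone (Z u) := fun u => monotone_cumSum (hznn u)
  have hZ_step : ∀ u, u ≠ ρ (arm u) → ∀ t ∈ Icc 1 B, Z u t ≤ p u * Z (parent u) (t - 1) :=
    fun u hu t ht => (hC2 u t ht).trans_eq <|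
      cumSum_eq_mul_cumSum_pred (hC1 u hu).1 (hC1 u hu).2 t (mem_Icc.mp ht).2
  have hπZ : ∀ u, π u = 0 → ∀ t ≤ B, Z u t = 0 := fun u =>
    eq_zero_of_pathProb_eq_zero hdepth_root hdepth (fun u => cumSum_nonneg (hznn u))
      (fun _ => cumSum_zero) hZ_step _ u rfl
  have hmarg : ∀ u, ∀ t ∈ Icc 1 B, z u t = ∑ j ∈ (range #(F (arm u))).filter
      (fun j => thresholdTime B π Z (layer (F (arm u)) (j + 1)) u = t),
      thresholdProb B π Z (layer (F (arm u)) (j + 1))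
        (layer (F (arm u)) (j + 1) - layer (F (arm u)) j) u := fun u t ht => by
    rw [sum_thresholdProb_layer_of_time_eq pos_of_mem_breakpoints (hπ u) cumSum_zero (hZ u)
      (hπZ u) (fun t ht => div_mem_insert_breakpoints (Z := Z) cumSum_zero ht
        (div_nonneg (cumSum_nonneg (hznn u) t) (hπ u))) ht]
    exact (cumSum_sub_cumSum_pred (mem_Icc.mp ht).1).symm
  refine ⟨fun i => #(F i), fun i j => thresholdTime B π Z (layer (F i) (j + 1)),
    fun i j => thresholdProb B π Z (layer (F i) (j + 1)) (layer (F i) (j + 1) - layer (F i) j),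
    card_breakpoints_le, fun i j hj => ?_, hmarg, fun t ht => ?_⟩
  · exact isStrategyForest_threshold (layer_succ_pos pos_of_mem_breakpoints hj)
      (sub_nonneg.mpr (layer_lt_layer pos_of_mem_breakpoints j.lt_succ_self hj).le) hπ
      (fun u hu => pathProb_eq_mul_parent (hdepth u hu)) (fun _ => cumSum_zero) hZ hZ_step i
  · calc _ = ∑ u, z u t := sum_congr rfl fun u _ => (hmarg u t ht).symm
      _ ≤ 1 := hC3 t ht

/-- (Convex decomposition, tree case.) Any solution `(z, w)`
of constraints (C1)–(C3) decomposes into at most `B·|S_i|` strategy forests per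
arm whose marginals reproduce `z`; consequently the total peeled probability at
each time is at most 1. -/
theorem stmt_5 {S : Type*} [Fintype S] [DecidableEq S] {n : ℕ}
    (B : ℕ)
    (arm : S → Fin n) (ρ : Fin n → S) (parent : S → S) (depth : S → ℕ) (p : S → ℝ)
    (hρ : ∀ i, arm (ρ i) = i)
    (hparent_arm : ∀ u, arm (parent u) = arm u)
    (hparent_root : ∀ i, parent (ρ i) = ρ i)
    (hdepth_root : ∀ i, depth (ρ i) = 0)
    (hdepth : ∀ u, u ≠ ρ (arm u) → depth u = depth (parent u) + 1)
    (hp : ∀ u, 0 ≤ p u ∧ p u ≤ 1)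
    (hpsum : ∀ v : S, ∑ u ∈ univ.filter (fun u => u ≠ ρ (arm u) ∧ parent u = v), p u ≤ 1)
    (z w : S → ℕ → ℝ)
    (hznn : ∀ u t, 0 ≤ z u t) (hwnn : ∀ u t, 0 ≤ w u t)
    (hC1 : ∀ u : S, u ≠ ρ (arm u) →
      w u 1 = 0 ∧ ∀ t ∈ Icc 2 B, w u t = z (parent u) (t - 1) * p u)
    (hC2 : ∀ u : S, ∀ t ∈ Icc 1 B, ∑ t' ∈ Icc 1 t, z u t' ≤ ∑ t' ∈ Icc 1 t, w u t')
    (hC3 : ∀ t ∈ Icc 1 B, ∑ u : S, z u t ≤ 1) :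
    ∃ (J : Fin n → ℕ) (time : Fin n → ℕ → S → WithTop ℕ) (prob : Fin n → ℕ → S → ℝ),
      (∀ i, J i ≤ B * (univ.filter (fun u => arm u = i)).card) ∧
      (∀ i, ∀ j < J i, IsStrategyForest B arm ρ parent p i (time i j) (prob i j)) ∧
      (∀ u : S, ∀ t ∈ Icc 1 B,
        z u t = ∑ j ∈ (range (J (arm u))).filter
          (fun j => time (arm u) j u = (t : WithTop ℕ)), prob (arm u) j u) ∧
      (∀ t ∈ Icc 1 B,
        ∑ u : S, ∑ j ∈ (range (J (arm u))).filter
          (fun j => time (arm u) j u = (t : WithTop ℕ)), prob (arm u) j u ≤ 1) :=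
  stmt_5_general B arm ρ parent depth p hdepth_root hdepth hp z w hznn hC1 hC2 hC3
end

section
/- Let {(time(i,j,·), prob(i,j,·))}_{i,j} be a finite collection of strategy forests (several per arm) satisfying ∑_{(i,j,u) : time(i,j,u) = t} prob(i,j,u) ≤ 1 for every t ∈ {1,…,B}. Then there exist maps time'(i,j,·) : S_i → {1,…,B} ∪ {∞} with time'(i,j,u) ≤ time(i,j,u) for all (i,j,u) and time'(i,j,u) = ∞ exactly when time(i,j,u) = ∞, such that each pair (time'(i,j,·), prob(i,j,·)) is again a strategy forest for arm i and the following two properties hold: (i) for every (i,j,u) with time'(i,j,u) ≠ ∞, the head of u with respect to time' satisfies time'(i,j,Head'(i,j,u)) ≥ 2·depth(Head'(i,j,u)); (ii) for every t ∈ {1,…,B}, ∑_{(i,j,u) : time'(i,j,u) = t} prob(i,j,u) ≤ 3. -/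
/-!
Gap filling: a state `u` keeps its time when `time u ≥ 2 · depth u`, and otherwise is played
right after its (already rescheduled) parent. Times only decrease, still increase along tree
edges, and a head is never glued to its parent, so it keeps a time `≥ 2 · depth`.

For the load at slot `t`, the states that stay at `t` contribute at most `1`. A state moved to
`t` had `t < time u < 2 · depth u`, so it has an ancestor on each level `d ≤ (t + 1) / 2`, and
that ancestor was originally played by time `t`. The states of one forest moved to `t` form an
antichain, so below a fixed ancestor they carry at most its probability. Hence for each of the
`(t + 1) / 2 + 1` levels the moved mass is at most the original mass played at slots `1, …, t`
on that level; summing over levels, `((t + 1) / 2 + 1) · moved ≤ t`, i.e. `moved ≤ 2`.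
-/

open Finset

/-- `h` is the head of `u`: `h` is the least-depth ancestor of `u` reachable
from `u` by a chain of tree edges along which the times are consecutive
(so the contiguity breaks at `h`, i.e. `time h ≠ time (parent h) + 1`). -/
def IsHeadOf {S : Type*} (parent : S → S) (time : S → WithTop ℕ) (h u : S) : Prop :=
  (∃ k : ℕ, parent^[k] u = h ∧
    ∀ m < k, time (parent^[m] u) = time (parent^[m + 1] u) + 1) ∧
  time h ≠ time (parent h) + 1

theorem exists_natCast_eq_of_ne_top {x : WithTop ℕ} (h : x ≠ ⊤) : ∃ a : ℕ, (a : WithTop ℕ) = x := by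
  induction x using WithTop.recTopCoe with
  | top => exact absurd rfl h
  | coe a => exact ⟨a, Nat.cast_withTop a⟩

section Tree

variable {S : Type*} {parent : S → S} {depth : S → ℕ}

theorem depth_iterate_parent (hdepth : ∀ u, depth u ≠ 0 → depth u = depth (parent u) + 1)
    (u : S) {m : ℕ} (hm : m ≤ depth u) : depth (parent^[m] u) = depth u - m := by
  induction m with
  | zero => rfl
  | succ m ih =>
    have hw := ih (by omega)
    have := hdepth (parent^[m] u) (by omega)
    rw [Function.iterate_succ_apply']
    omega

variable (parent depth) in
def IsDescendant (u v : S) : Prop :=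
  depth v ≤ depth u ∧ parent^[depth u - depth v] u = v

instance [DecidableEq S] : DecidableRel (IsDescendant parent depth) :=
  fun _ _ => inferInstanceAs (Decidable (_ ∧ _))

variable (parent depth) in
/-- As `⊤ + 1 = ⊤`, this also forces the children of unplayed states to be unplayed. -/
def EdgeIncreasingOn (A : Finset S) (f : S → WithTop ℕ) : Prop :=
  ∀ u ∈ A, depth u ≠ 0 → f (parent u) + 1 ≤ f u

variable {A : Finset S} {f : S → WithTop ℕ}

theorem EdgeIncreasingOn.iterate_add_le
    (hdepth : ∀ u, depth u ≠ 0 → depth u = depth (parent u) + 1) (hA : Set.MapsTo parent A A)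
    (hf : EdgeIncreasingOn parent depth A f) {u : S} (hu : u ∈ A) {m : ℕ} (hm : m ≤ depth u) :
    f (parent^[m] u) + m ≤ f u := by
  induction m with
  | zero => simp
  | succ m ih =>
    have hedge := hf _ (hA.iterate m hu) (by rw [depth_iterate_parent hdepth u (by omega)]; omega)
    calc f (parent^[m + 1] u) + ((m + 1 : ℕ) : WithTop ℕ)
        = f (parent (parent^[m] u)) + 1 + m := by
          rw [Function.iterate_succ_apply']; push_cast; ring
      _ ≤ f (parent^[m] u) + m := by gcongr
      _ ≤ f u := ih (by omega)

theorem EdgeIncreasingOn.eq_of_isDescendant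
    (hdepth : ∀ u, depth u ≠ 0 → depth u = depth (parent u) + 1) (hA : Set.MapsTo parent A A)
    (hf : EdgeIncreasingOn parent depth A f) {u v : S} (hu : u ∈ A)
    (huv : IsDescendant parent depth u v) {t : ℕ} (hut : f u = t) (hvt : f v = t) : u = v := by
  obtain ⟨hle, hanc⟩ := huv
  have h := hf.iterate_add_le hdepth hA hu (m := depth u - depth v) (by omega)
  rw [hanc, hut, hvt] at h
  have hm : depth u - depth v = 0 := by
    have : t + (depth u - depth v) ≤ t := by exact_mod_cast h
    omega
  rwa [hm] at hanc

variable (parent depth) in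
/-- `fillGaps` runs this with fuel `depth u`; the fuel only runs out at a root, where
`2 * depth u ≤ time u` holds anyway. -/
def fillGapsAux (time : S → WithTop ℕ) : ℕ → S → WithTop ℕ
  | 0, u => time u
  | k + 1, u => if ((2 * depth u : ℕ) : WithTop ℕ) ≤ time u then time u
      else fillGapsAux time k (parent u) + 1

variable (parent depth) in
def fillGaps (time : S → WithTop ℕ) (u : S) : WithTop ℕ :=
  fillGapsAux parent depth time (depth u) u

variable {time : S → WithTop ℕ} {u : S}

theorem fillGaps_of_le (h : ((2 * depth u : ℕ) : WithTop ℕ) ≤ time u) :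
    fillGaps parent depth time u = time u := by
  unfold fillGaps
  cases depth u with
  | zero => rfl
  | succ k => exact if_pos h

theorem fillGaps_of_lt (hdepth : ∀ u, depth u ≠ 0 → depth u = depth (parent u) + 1)
    (h : time u < ((2 * depth u : ℕ) : WithTop ℕ)) :
    fillGaps parent depth time u = fillGaps parent depth time (parent u) + 1 := by
  have hu : depth u ≠ 0 := by rintro h0; simp [h0] at h
  unfold fillGaps
  rw [hdepth u hu]
  exact if_neg (not_le.mpr (hdepth u hu ▸ h))

theorem fillGaps_le (hdepth : ∀ u, depth u ≠ 0 → depth u = depth (parent u) + 1)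
    (hA : Set.MapsTo parent A A) (htime : EdgeIncreasingOn parent depth A time) (hu : u ∈ A) :
    fillGaps parent depth time u ≤ time u := by
  induction hk : depth u generalizing u with
  | zero => exact (fillGaps_of_le (by simp [hk])).le
  | succ k ih =>
    rcases le_or_gt ((2 * depth u : ℕ) : WithTop ℕ) (time u) with h | h
    · exact (fillGaps_of_le h).le
    · rw [fillGaps_of_lt hdepth h]
      calc fillGaps parent depth time (parent u) + 1 ≤ time (parent u) + 1 := by
            gcongr; exact ih (hA hu) (by have := hdepth u (by omega); omega)
        _ ≤ time u := htime u hu (by omega)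

theorem fillGaps_eq_top_iff (hdepth : ∀ u, depth u ≠ 0 → depth u = depth (parent u) + 1)
    (hA : Set.MapsTo parent A A) (htime : EdgeIncreasingOn parent depth A time) (hu : u ∈ A) :
    fillGaps parent depth time u = ⊤ ↔ time u = ⊤ :=
  ⟨fun h => top_le_iff.mp (h ▸ fillGaps_le hdepth hA htime hu),
    fun h => (fillGaps_of_le (h ▸ le_top)).trans h⟩

theorem edgeIncreasingOn_fillGaps (hdepth : ∀ u, depth u ≠ 0 → depth u = depth (parent u) + 1)
    (hA : Set.MapsTo parent A A) (htime : EdgeIncreasingOn parent depth A time) :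
    EdgeIncreasingOn parent depth A (fillGaps parent depth time) := by
  intro u hu hu0
  rcases le_or_gt ((2 * depth u : ℕ) : WithTop ℕ) (time u) with h | h
  · rw [fillGaps_of_le h]
    calc fillGaps parent depth time (parent u) + 1 ≤ time (parent u) + 1 := by
          gcongr; exact fillGaps_le hdepth hA htime (hA hu)
      _ ≤ time u := htime u hu hu0
  · exact (fillGaps_of_lt hdepth h).ge

theorem one_le_fillGaps (hdepth : ∀ u, depth u ≠ 0 → depth u = depth (parent u) + 1)
    (h : 1 ≤ time u) : 1 ≤ fillGaps parent depth time u := by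
  rcases le_or_gt ((2 * depth u : ℕ) : WithTop ℕ) (time u) with h' | h'
  · rwa [fillGaps_of_le h']
  · rw [fillGaps_of_lt hdepth h']
    exact le_add_self

theorem two_mul_depth_le_fillGaps (hdepth : ∀ u, depth u ≠ 0 → depth u = depth (parent u) + 1)
    (h : fillGaps parent depth time u ≠ fillGaps parent depth time (parent u) + 1) :
    ((2 * depth u : ℕ) : WithTop ℕ) ≤ fillGaps parent depth time u := by
  rcases le_or_gt ((2 * depth u : ℕ) : WithTop ℕ) (time u) with h' | h'
  · rwa [fillGaps_of_le h']
  · exact absurd (fillGaps_of_lt hdepth h') h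

theorem add_two_le_two_mul_depth_of_fillGaps_eq
    (hdepth : ∀ u, depth u ≠ 0 → depth u = depth (parent u) + 1)
    (hA : Set.MapsTo parent A A) (htime : EdgeIncreasingOn parent depth A time) (hu : u ∈ A)
    {t : ℕ} (ht : fillGaps parent depth time u = t) (hne : time u ≠ t) : t + 2 ≤ 2 * depth u := by
  have hle := ht ▸ fillGaps_le hdepth hA htime hu
  have hlt : time u < ((2 * depth u : ℕ) : WithTop ℕ) :=
    not_le.mp fun h => hne ((fillGaps_of_le h).symm.trans ht)
  obtain ⟨s, hs⟩ := exists_natCast_eq_of_ne_top hlt.ne_top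
  rw [← hs] at hle hlt hne
  norm_cast at hle hlt hne
  omega

theorem time_le_of_fillGaps_le {t : ℕ} (h : fillGaps parent depth time u ≤ t)
    (hd : 2 * depth u ≤ t + 1) : time u ≤ t := by
  rcases le_or_gt ((2 * depth u : ℕ) : WithTop ℕ) (time u) with h' | h'
  · rwa [fillGaps_of_le h'] at h
  · obtain ⟨s, hs⟩ := exists_natCast_eq_of_ne_top h'.ne_top
    rw [← hs] at h' ⊢
    norm_cast at h' ⊢
    omega

/-- Either the ancestor kept its time, or that time was below twice its depth. -/
theorem time_iterate_parent_le (hdepth : ∀ u, depth u ≠ 0 → depth u = depth (parent u) + 1)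
    (hA : Set.MapsTo parent A A) (htime : EdgeIncreasingOn parent depth A time) (hu : u ∈ A)
    {t : ℕ} (ht : fillGaps parent depth time u = t) {m : ℕ} (hm : m ≤ depth u)
    (hd : 2 * depth (parent^[m] u) ≤ t + 1) : time (parent^[m] u) ≤ t := by
  have h := (edgeIncreasingOn_fillGaps hdepth hA htime).iterate_add_le hdepth hA hu hm
  rw [ht] at h
  exact time_le_of_fillGaps_le (le_self_add.trans h) hd

variable {p prob : S → ℝ}

theorem sum_le_of_subset_singleton {s : Finset S} {v : S} (hs : s ⊆ {v}) (hv : 0 ≤ prob v) :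
    ∑ u ∈ s, prob u ≤ prob v :=
  (sum_le_sum_of_subset_of_nonneg hs (by simp_all)).trans_eq (sum_singleton _ _)

def load (A : Finset S) (prob : S → ℝ) (time : S → WithTop ℕ) (t : ℕ) : ℝ :=
  ∑ u ∈ A with time u = t, prob u

theorem sum_time_le_eq_sum_load (hpos : ∀ u ∈ A, 1 ≤ time u) (t : ℕ) :
    ∑ v ∈ A with time v ≤ t, prob v = ∑ s ∈ Icc 1 t, load A prob time s := by
  have hmaps : ∀ v ∈ A.filter (fun v => time v ≤ t), (time v).untopD 0 ∈ Icc 1 t := by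
    intro v hv
    obtain ⟨hv, hvt⟩ := mem_filter.mp hv
    have h1 := hpos v hv
    obtain ⟨a, ha⟩ := exists_natCast_eq_of_ne_top (ne_top_of_le_ne_top (by simp) hvt)
    rw [← ha] at h1 hvt
    rw [← ha, show WithTop.untopD 0 (a : WithTop ℕ) = a from rfl]
    norm_cast at h1 hvt
    exact mem_Icc.mpr ⟨h1, hvt⟩
  rw [← sum_fiberwise_of_maps_to hmaps]
  refine sum_congr rfl fun s hs => ?_
  obtain ⟨hs1, hst⟩ := mem_Icc.mp hs
  rw [load, filter_filter]
  refine sum_congr (filter_congr fun v _ => ?_) fun _ _ => rfl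
  by_cases hv : time v = ⊤
  · simp [hv]
  · obtain ⟨a, ha⟩ := exists_natCast_eq_of_ne_top hv
    rw [← ha, show WithTop.untopD 0 (a : WithTop ℕ) = a from rfl]
    norm_cast
    omega

variable [DecidableEq S]

variable (parent depth) in
structure IsFlowOn (A : Finset S) (p prob : S → ℝ) : Prop where
  prob_nonneg : ∀ u ∈ A, 0 ≤ prob u
  p_nonneg : ∀ u, 0 ≤ p u
  sum_p_children_le_one : ∀ v, ∑ u ∈ A with depth u ≠ 0 ∧ parent u = v, p u ≤ 1
  prob_le_mul_parent : ∀ u ∈ A, depth u ≠ 0 → prob u ≤ p u * prob (parent u)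

theorem sum_descendants_le_sum_children
    (hdepth : ∀ u, depth u ≠ 0 → depth u = depth (parent u) + 1) (hA : Set.MapsTo parent A A)
    (hprob : ∀ u ∈ A, 0 ≤ prob u) {t : ℕ} {v : S} (hfv : f v ≠ t) :
    ∑ u ∈ A with IsDescendant parent depth u v ∧ f u = t, prob u ≤
      ∑ c ∈ A with depth c ≠ 0 ∧ parent c = v,
        ∑ u ∈ A with IsDescendant parent depth u c ∧ f u = t, prob u := by
  have hmaps : ∀ u ∈ A.filter (fun u => IsDescendant parent depth u v ∧ f u = t),
      parent^[depth u - (depth v + 1)] u ∈ A.filter fun c => depth c ≠ 0 ∧ parent c = v := by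
    intro u hu
    obtain ⟨hu, ⟨hle, hanc⟩, hut⟩ := mem_filter.mp hu
    have hlt : depth v < depth u := by
      refine lt_of_le_of_ne hle fun heq => hfv ?_
      rw [heq, Nat.sub_self] at hanc
      rwa [← hanc]
    have hd := depth_iterate_parent hdepth u (m := depth u - (depth v + 1)) (by omega)
    refine mem_filter.mpr ⟨hA.iterate _ hu, by omega, ?_⟩
    rwa [← Function.iterate_succ_apply' parent, show (depth u - (depth v + 1)).succ =
      depth u - depth v by omega]
  refine (sum_fiberwise_of_maps_to hmaps _).symm.le.trans (sum_le_sum fun c hc => ?_)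
  obtain ⟨-, hc0, hcv⟩ := mem_filter.mp hc
  have hcd : depth c = depth v + 1 := hcv ▸ hdepth c hc0
  refine sum_le_sum_of_subset_of_nonneg (fun u hu => ?_)
    fun u hu _ => hprob u (mem_filter.mp hu).1
  obtain ⟨hu', hanc⟩ := mem_filter.mp hu
  obtain ⟨hu, -, hut⟩ := mem_filter.mp hu'
  have hd := depth_iterate_parent hdepth u (m := depth u - (depth v + 1)) (by omega)
  rw [hanc] at hd
  refine mem_filter.mpr ⟨hu, ⟨by omega, ?_⟩, hut⟩
  rwa [hcd]

/-- The states of one level set of an edge-increasing `f` form an antichain, so inside the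
subtree of `v` their mass is at most `prob v`. -/
theorem IsFlowOn.sum_descendants_le
    (hdepth : ∀ u, depth u ≠ 0 → depth u = depth (parent u) + 1) (hA : Set.MapsTo parent A A)
    (hflow : IsFlowOn parent depth A p prob) (hf : EdgeIncreasingOn parent depth A f) (t : ℕ)
    {v : S} (hv : v ∈ A) :
    ∑ u ∈ A with IsDescendant parent depth u v ∧ f u = t, prob u ≤ prob v := by
  suffices key : ∀ k, ∀ v ∈ A, (∀ u ∈ A, depth u ≤ depth v + k) →
      ∑ u ∈ A with IsDescendant parent depth u v ∧ f u = t, prob u ≤ prob v from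
    key (A.sup depth) v hv fun u hu => (le_sup hu).trans (Nat.le_add_left _ _)
  intro k
  induction k with
  | zero =>
    intro v hv hk
    refine sum_le_of_subset_singleton (fun u hu => ?_) (hflow.prob_nonneg v hv)
    obtain ⟨hu, ⟨hle, hanc⟩, -⟩ := mem_filter.mp hu
    have hm : depth u - depth v = 0 := by have := hk u hu; omega
    rw [hm] at hanc
    exact mem_singleton.mpr hanc
  | succ k ih =>
    intro v hv hk
    by_cases hfv : f v = t
    · refine sum_le_of_subset_singleton (fun u hu => ?_) (hflow.prob_nonneg v hv)
      obtain ⟨hu, huv, hut⟩ := mem_filter.mp hu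
      exact mem_singleton.mpr (hf.eq_of_isDescendant hdepth hA hu huv hut hfv)
    calc _ ≤ ∑ c ∈ A with depth c ≠ 0 ∧ parent c = v,
          ∑ u ∈ A with IsDescendant parent depth u c ∧ f u = t, prob u :=
          sum_descendants_le_sum_children hdepth hA hflow.prob_nonneg hfv
      _ ≤ ∑ c ∈ A with depth c ≠ 0 ∧ parent c = v, p c * prob v := by
          refine sum_le_sum fun c hc => ?_
          obtain ⟨hc, hc0, hcv⟩ := mem_filter.mp hc
          have hcd := hcv ▸ hdepth c hc0
          refine (ih c hc fun u hu => ?_).trans (hcv ▸ hflow.prob_le_mul_parent c hc hc0)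
          have := hk u hu
          omega
      _ = (∑ c ∈ A with depth c ≠ 0 ∧ parent c = v, p c) * prob v := (sum_mul _ _ _).symm
      _ ≤ prob v :=
          mul_le_of_le_one_left (hflow.prob_nonneg v hv) (hflow.sum_p_children_le_one v)

theorem sum_moved_le_sum_level (hdepth : ∀ u, depth u ≠ 0 → depth u = depth (parent u) + 1)
    (hA : Set.MapsTo parent A A) (hflow : IsFlowOn parent depth A p prob)
    (htime : EdgeIncreasingOn parent depth A time) {t d : ℕ} (hd : d ≤ (t + 1) / 2) :
    ∑ u ∈ A with fillGaps parent depth time u = t ∧ time u ≠ t, prob u ≤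
      ∑ v ∈ A with time v ≤ t ∧ depth v = d, prob v := by
  have hmaps : ∀ u ∈ A.filter (fun u => fillGaps parent depth time u = t ∧ time u ≠ t),
      parent^[depth u - d] u ∈ A.filter (fun v => time v ≤ t ∧ depth v = d) := by
    intro u hu
    obtain ⟨hu, hut, hne⟩ := mem_filter.mp hu
    have hdu := add_two_le_two_mul_depth_of_fillGaps_eq hdepth hA htime hu hut hne
    have hw := depth_iterate_parent hdepth u (m := depth u - d) (by omega)
    exact mem_filter.mpr ⟨hA.iterate _ hu,
      time_iterate_parent_le hdepth hA htime hu hut (by omega) (by omega), by omega⟩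
  refine (sum_fiberwise_of_maps_to hmaps _).symm.le.trans (sum_le_sum fun v hv => ?_)
  obtain ⟨hv, -, hvd⟩ := mem_filter.mp hv
  refine le_trans (sum_le_sum_of_subset_of_nonneg (fun u hu => ?_)
    fun u hu _ => hflow.prob_nonneg u (mem_filter.mp hu).1)
    (hflow.sum_descendants_le hdepth hA (edgeIncreasingOn_fillGaps hdepth hA htime) t hv)
  obtain ⟨hu', hanc⟩ := mem_filter.mp hu
  obtain ⟨hu, hut, hne⟩ := mem_filter.mp hu'
  have hdu := add_two_le_two_mul_depth_of_fillGaps_eq hdepth hA htime hu hut hne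
  exact mem_filter.mpr ⟨hu, ⟨by omega, by rwa [hvd]⟩, hut⟩

theorem mul_load_fillGaps_le (hdepth : ∀ u, depth u ≠ 0 → depth u = depth (parent u) + 1)
    (hA : Set.MapsTo parent A A) (hflow : IsFlowOn parent depth A p prob)
    (htime : EdgeIncreasingOn parent depth A time) (hpos : ∀ u ∈ A, 1 ≤ time u) (t : ℕ) :
    (((t + 1) / 2 + 1 : ℕ) : ℝ) * load A prob (fillGaps parent depth time) t ≤
      ((t + 1) / 2 + 1 : ℕ) * load A prob time t + ∑ s ∈ Icc 1 t, load A prob time s := by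
  set K := (t + 1) / 2 + 1
  set M := ∑ u ∈ A with fillGaps parent depth time u = t ∧ time u ≠ t, prob u
  have hsplit : load A prob (fillGaps parent depth time) t ≤ load A prob time t + M := by
    rw [load, ← sum_filter_add_sum_filter_not _ (fun u => time u = t), filter_filter,
      filter_filter]
    refine add_le_add_left (sum_le_sum_of_subset_of_nonneg ?_ ?_) M
    · exact fun u hu => mem_filter.mpr ⟨(mem_filter.mp hu).1, (mem_filter.mp hu).2.2⟩
    · exact fun u hu _ => hflow.prob_nonneg u (mem_filter.mp hu).1
  have hmoved : K * M ≤ ∑ s ∈ Icc 1 t, load A prob time s :=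
    calc K * M = ∑ d ∈ range K, M := by simp
      _ ≤ ∑ d ∈ range K, ∑ v ∈ A.filter (fun v => time v ≤ t) with depth v = d, prob v := by
          refine sum_le_sum fun d hd => ?_
          rw [filter_filter]
          exact sum_moved_le_sum_level hdepth hA hflow htime (by simp at hd; omega)
      _ ≤ ∑ v ∈ A with time v ≤ t, prob v :=
          sum_fiberwise_le_sum_of_sum_fiber_nonneg fun d _ =>
            sum_nonneg fun v hv => hflow.prob_nonneg v (mem_filter.mp (mem_filter.mp hv).1).1
      _ = ∑ s ∈ Icc 1 t, load A prob time s := sum_time_le_eq_sum_load hpos t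
  nlinarith [mul_le_mul_of_nonneg_left hsplit (Nat.cast_nonneg K : (0 : ℝ) ≤ K)]

end Tree

theorem sum_le_three_of_mul_le {ι : Type*} (F : Finset ι) (a : ι → ℝ) (b : ι → ℕ → ℝ) {t : ℕ}
    (ht : 1 ≤ t)
    (hab : ∀ x ∈ F, (((t + 1) / 2 + 1 : ℕ) : ℝ) * a x ≤
      ((t + 1) / 2 + 1 : ℕ) * b x t + ∑ s ∈ Icc 1 t, b x s)
    (hb : ∀ s ∈ Icc 1 t, ∑ x ∈ F, b x s ≤ 1) : ∑ x ∈ F, a x ≤ 3 := by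
  set K := (t + 1) / 2 + 1
  have hsum : (K : ℝ) * ∑ x ∈ F, a x ≤ K + t :=
    calc (K : ℝ) * ∑ x ∈ F, a x ≤ ∑ x ∈ F, (K * b x t + ∑ s ∈ Icc 1 t, b x s) := by
          rw [mul_sum]
          exact sum_le_sum hab
      _ = K * ∑ x ∈ F, b x t + ∑ s ∈ Icc 1 t, ∑ x ∈ F, b x s := by
          rw [sum_add_distrib, mul_sum, sum_comm (s := F)]
      _ ≤ K * 1 + ∑ s ∈ Icc 1 t, (1 : ℝ) := by
          gcongr with s hs
          · exact hb t (mem_Icc.mpr ⟨ht, le_rfl⟩)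
          · exact hb s hs
      _ = K + t := by simp
  have hKt : (t : ℝ) ≤ 2 * K := by norm_cast; omega
  exact le_of_mul_le_mul_left (hsum.trans (by linarith)) (by positivity)

section StrategyForest

variable {S : Type*} [Fintype S] {n : ℕ} {B : ℕ} {arm : S → Fin n} {ρ : Fin n → S}
  {parent : S → S} {depth : S → ℕ} {p : S → ℝ} {i : Fin n} {time : S → WithTop ℕ} {prob : S → ℝ}

theorem mapsTo_parent_filter_arm (hparent_arm : ∀ u, arm (parent u) = arm u) (i : Fin n) :
    Set.MapsTo parent (univ.filter fun u => arm u = i : Finset S)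
      (univ.filter fun u => arm u = i) :=
  fun u hu => by simpa [hparent_arm] using hu

theorem IsStrategyForest.one_le_time (h : IsStrategyForest B arm ρ parent p i time prob) :
    ∀ u ∈ (univ.filter fun u => arm u = i : Finset S), 1 ≤ time u := by
  intro u hu
  by_cases ht : time u = ⊤
  · simp [ht]
  · exact (h.2.1 u (mem_filter.mp hu).2 ht).1

theorem IsStrategyForest.edgeIncreasingOn (hroot : ∀ u, depth u = 0 ↔ u = ρ (arm u))
    (h : IsStrategyForest B arm ρ parent p i time prob) :
    EdgeIncreasingOn parent depth (univ.filter fun u => arm u = i) time := by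
  intro u hu hu0
  have hui := (mem_filter.mp hu).2
  obtain ⟨-, hle, -, -⟩ := h.2.2 u hui fun hρ => hu0 ((hroot u).2 (by rwa [hui]))
  by_cases ht : time u = ⊤
  · simp [ht]
  · exact hle ht

/-- The strategy-forest equation `prob u = p u * prob (parent u)` only holds for played states,
but unplayed ones carry probability `0`, so the inequality holds everywhere. -/
theorem IsStrategyForest.isFlowOn [DecidableEq S] (hroot : ∀ u, depth u = 0 ↔ u = ρ (arm u))
    (hparent_arm : ∀ u, arm (parent u) = arm u) (hp : ∀ u, 0 ≤ p u)
    (hpsum : ∀ v : S, ∑ u ∈ univ.filter (fun u => u ≠ ρ (arm u) ∧ parent u = v), p u ≤ 1)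
    (h : IsStrategyForest B arm ρ parent p i time prob) :
    IsFlowOn parent depth (univ.filter fun u => arm u = i) p prob where
  prob_nonneg u hu := h.1 u (mem_filter.mp hu).2
  p_nonneg := hp
  sum_p_children_le_one v := by
    refine le_trans (sum_le_sum_of_subset_of_nonneg (fun u hu => ?_) fun u _ _ => hp u) (hpsum v)
    obtain ⟨-, hu0, hv⟩ := mem_filter.mp hu
    exact mem_filter.mpr ⟨mem_univ u, mt (hroot u).2 hu0, hv⟩
  prob_le_mul_parent u hu hu0 := by
    have hui := (mem_filter.mp hu).2
    obtain ⟨-, -, hprob, hprob0⟩ := h.2.2 u hui fun hρ => hu0 ((hroot u).2 (by rwa [hui]))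
    by_cases ht : time u = ⊤
    · rw [hprob0 ht]
      exact mul_nonneg (hp u) (h.1 _ (by rw [hparent_arm, hui]))
    · exact (hprob ht).le

theorem isStrategyForest_fillGaps (hroot : ∀ u, depth u = 0 ↔ u = ρ (arm u))
    (hdepth : ∀ u, depth u ≠ 0 → depth u = depth (parent u) + 1)
    (hparent_arm : ∀ u, arm (parent u) = arm u)
    (h : IsStrategyForest B arm ρ parent p i time prob) :
    IsStrategyForest B arm ρ parent p i (fillGaps parent depth time) prob := by
  have hA := mapsTo_parent_filter_arm hparent_arm i
  have htime := h.edgeIncreasingOn hroot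
  have hmem : ∀ u, arm u = i → u ∈ (univ.filter fun u => arm u = i : Finset S) := by simp
  have htop : ∀ u, arm u = i → (fillGaps parent depth time u = ⊤ ↔ time u = ⊤) :=
    fun u hu => fillGaps_eq_top_iff hdepth hA htime (hmem u hu)
  refine ⟨h.1, fun u hu hne => ?_, fun u hu hne => ?_⟩
  · obtain ⟨h1, hB⟩ := h.2.1 u hu (mt (htop u hu).2 hne)
    exact ⟨one_le_fillGaps hdepth h1, (fillGaps_le hdepth hA htime (hmem u hu)).trans hB⟩
  · have hu0 : depth u ≠ 0 := fun h0 => hne (hu ▸ (hroot u).1 h0)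
    have hedge := edgeIncreasingOn_fillGaps hdepth hA htime u (hmem u hu) hu0
    obtain ⟨-, -, hprob, hprob0⟩ := h.2.2 u hu hne
    refine ⟨fun h' => top_le_iff.mp (by simpa [h'] using hedge), fun _ => hedge,
      fun h' => hprob (mt (htop u hu).2 h'), fun h' => hprob0 ((htop u hu).1 h')⟩

theorem sum_sum_filter_eq_sum_load (arm : S → Fin n) (J : Fin n → ℕ)
    (τ : Fin n → ℕ → S → WithTop ℕ) (prob : Fin n → ℕ → S → ℝ) (t : ℕ) :
    ∑ u : S, ∑ j ∈ (range (J (arm u))).filter (fun j => τ (arm u) j u = (t : WithTop ℕ)),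
        prob (arm u) j u =
      ∑ x ∈ univ.sigma fun i => range (J i),
        load (univ.filter fun u => arm u = x.1) (prob x.1 x.2) (τ x.1 x.2) t := by
  rw [sum_sigma, ← sum_fiberwise univ arm]
  refine sum_congr rfl fun i _ => ?_
  calc _ = ∑ u ∈ univ.filter (fun u => arm u = i),
        ∑ j ∈ (range (J i)).filter (fun j => τ i j u = t), prob i j u :=
        sum_congr rfl fun u hu => by rw [(mem_filter.mp hu).2]
    _ = _ := sum_comm' fun u j => by simp only [mem_filter]; tauto

end StrategyForest

theorem stmt_6_general {S : Type*} [Fintype S] [DecidableEq S] {n : ℕ}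
    (B : ℕ)
    (arm : S → Fin n) (ρ : Fin n → S) (parent : S → S) (depth : S → ℕ) (p : S → ℝ)
    (hparent_arm : ∀ u, arm (parent u) = arm u)
    (hdepth_root : ∀ i, depth (ρ i) = 0)
    (hdepth : ∀ u, u ≠ ρ (arm u) → depth u = depth (parent u) + 1)
    (hp : ∀ u, 0 ≤ p u ∧ p u ≤ 1)
    (hpsum : ∀ v : S, ∑ u ∈ univ.filter (fun u => u ≠ ρ (arm u) ∧ parent u = v), p u ≤ 1)
    (J : Fin n → ℕ) (time : Fin n → ℕ → S → WithTop ℕ) (prob : Fin n → ℕ → S → ℝ)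
    (hSF : ∀ i, ∀ j < J i, IsStrategyForest B arm ρ parent p i (time i j) (prob i j))
    (hload : ∀ t ∈ Icc 1 B,
      ∑ u : S, ∑ j ∈ (range (J (arm u))).filter
        (fun j => time (arm u) j u = (t : WithTop ℕ)), prob (arm u) j u ≤ 1) :
    ∃ time' : Fin n → ℕ → S → WithTop ℕ,
      (∀ i, ∀ j < J i, ∀ u, arm u = i →
        time' i j u ≤ time i j u ∧ (time' i j u = ⊤ ↔ time i j u = ⊤)) ∧
      (∀ i, ∀ j < J i, IsStrategyForest B arm ρ parent p i (time' i j) (prob i j)) ∧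
      (∀ i, ∀ j < J i, ∀ u, arm u = i → time' i j u ≠ ⊤ →
        ∀ h, IsHeadOf parent (time' i j) h u →
          ((2 * depth h : ℕ) : WithTop ℕ) ≤ time' i j h) ∧
      (∀ t ∈ Icc 1 B,
        ∑ u : S, ∑ j ∈ (range (J (arm u))).filter
          (fun j => time' (arm u) j u = (t : WithTop ℕ)), prob (arm u) j u ≤ 3) := by
  have hroot : ∀ u, depth u = 0 ↔ u = ρ (arm u) := fun u =>
    ⟨fun h0 => by_contra fun hu => by simp [hdepth u hu] at h0,
      fun hu => by rw [hu]; exact hdepth_root _⟩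
  have hdepth' : ∀ u, depth u ≠ 0 → depth u = depth (parent u) + 1 :=
    fun u hu => hdepth u (mt (hroot u).2 hu)
  have hA := mapsTo_parent_filter_arm hparent_arm
  refine ⟨fun i j => fillGaps parent depth (time i j), fun i j hj u hu => ?_,
    fun i j hj => isStrategyForest_fillGaps hroot hdepth' hparent_arm (hSF i j hj),
    fun i j _ u _ _ h hh => two_mul_depth_le_fillGaps hdepth' hh.2, fun t ht => ?_⟩
  · have hmem : u ∈ (univ.filter fun u => arm u = i : Finset S) := by simp [hu]
    have htime := (hSF i j hj).edgeIncreasingOn hroot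
    exact ⟨fillGaps_le hdepth' (hA i) htime hmem, fillGaps_eq_top_iff hdepth' (hA i) htime hmem⟩
  obtain ⟨ht1, htB⟩ := mem_Icc.mp ht
  rw [sum_sum_filter_eq_sum_load arm J (fun i j => fillGaps parent depth (time i j))]
  refine sum_le_three_of_mul_le _ _
    (fun x s => load (univ.filter fun u => arm u = x.1) (prob x.1 x.2) (time x.1 x.2) s) ht1
    (fun x hx => ?_) fun s hs => ?_
  · have h := hSF x.1 x.2 (mem_range.mp (mem_sigma.mp hx).2)
    exact mul_load_fillGaps_le hdepth' (hA x.1)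
      (h.isFlowOn hroot hparent_arm (fun u => (hp u).1) hpsum) (h.edgeIncreasingOn hroot)
      h.one_le_time t
  · rw [← sum_sum_filter_eq_sum_load]
    exact hload s (Icc_subset_Icc_right htB hs)

/-- (Gap filling.) Given a collection of strategy forests with
total load at most 1 at each time, the times can be only decreased (keeping
`∞` exactly where it was) so that each forest remains a strategy forest, every
head `h` of a played state satisfies `time'(h) ≥ 2·depth(h)`, and the total
load at each time is at most 3. -/
theorem stmt_6 {S : Type*} [Fintype S] [DecidableEq S] {n : ℕ}
    (B : ℕ)
    (arm : S → Fin n) (ρ : Fin n → S) (parent : S → S) (depth : S → ℕ) (p : S → ℝ)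
    (hρ : ∀ i, arm (ρ i) = i)
    (hparent_arm : ∀ u, arm (parent u) = arm u)
    (hparent_root : ∀ i, parent (ρ i) = ρ i)
    (hdepth_root : ∀ i, depth (ρ i) = 0)
    (hdepth : ∀ u, u ≠ ρ (arm u) → depth u = depth (parent u) + 1)
    (hp : ∀ u, 0 ≤ p u ∧ p u ≤ 1)
    (hpsum : ∀ v : S, ∑ u ∈ univ.filter (fun u => u ≠ ρ (arm u) ∧ parent u = v), p u ≤ 1)
    (J : Fin n → ℕ) (time : Fin n → ℕ → S → WithTop ℕ) (prob : Fin n → ℕ → S → ℝ)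
    (hSF : ∀ i, ∀ j < J i, IsStrategyForest B arm ρ parent p i (time i j) (prob i j))
    (hload : ∀ t ∈ Icc 1 B,
      ∑ u : S, ∑ j ∈ (range (J (arm u))).filter
        (fun j => time (arm u) j u = (t : WithTop ℕ)), prob (arm u) j u ≤ 1) :
    ∃ time' : Fin n → ℕ → S → WithTop ℕ,
      (∀ i, ∀ j < J i, ∀ u, arm u = i →
        time' i j u ≤ time i j u ∧ (time' i j u = ⊤ ↔ time i j u = ⊤)) ∧
      (∀ i, ∀ j < J i, IsStrategyForest B arm ρ parent p i (time' i j) (prob i j)) ∧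
      (∀ i, ∀ j < J i, ∀ u, arm u = i → time' i j u ≠ ⊤ →
        ∀ h, IsHeadOf parent (time' i j) h u →
          ((2 * depth h : ℕ) : WithTop ℕ) ≤ time' i j h) ∧
      (∀ t ∈ Icc 1 B,
        ∑ u : S, ∑ j ∈ (range (J (arm u))).filter
          (fun j => time' (arm u) j u = (t : WithTop ℕ)), prob (arm u) j u ≤ 3) :=
  stmt_6_general B arm ρ parent depth p hparent_arm hdepth_root hdepth hp hpsum J time prob hSF
    hload
end

section
/- Suppose (z, w) satisfies (C1')–(C3') and z_{u,t} > 0 for some u ∈ S_i and t, for a fixed arm i. Then there exist a strategy dag D for arm i with values prob(u,t) and nonnegative (z', w') with z'_{u,t} ≤ z_{u,t} for all u, t, such that: (z', w') satisfies (C1')–(C3'); z_{u,t} − z'_{u,t} = prob(u,t) for every u ∈ S_i and t ∈ {1,…,B}, while z' = z and w' = w on the states of all other arms; and z'_{u,t} = 0 < z_{u,t} for at least one pair (u,t) with u ∈ S_i. -/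
/-!
By (C1') and (C2'), positive `z`-mass on a state can only have been fed by a predecessor with
positive `z`-mass at an earlier time, so positivity on arm `i` propagates back to some time `t₀`
at which `z` is positive at the source `ρ i`. From `(ρ i, t₀)` push one unit of mass through the
layered DAG: mass leaving `v` at time `s` along the arc to `u` waits until the first time after
`s` at which `z u` is positive (forever if there is none). The largest multiple `ε` of this flow
below `z` is the strategy dag; `z - ε • flow` vanishes where the ratio `z / flow` is minimal.
(C1') for the residual defines `w'`, and (C2') survives because the mass that has left for `u`
before time `t` without arriving by `t` was sent while `z u` stayed zero, so it is covered by
the slack `∑_{r ≤ t} w u r - ∑_{r ≤ t} z u r`.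
-/

open Finset
open scoped Classical

def IsStrategyDag {S : Type*} [Fintype S] {n : ℕ} (B : ℕ) (arm : S → Fin n)
    (ρ : Fin n → S) (p : S → S → ℝ) (i : Fin n)
    (prob : S → WithTop ℕ → ℝ) (R : S → WithTop ℕ → S → WithTop ℕ → Prop) : Prop :=
  (∀ u t, arm u = i → 0 ≤ prob u t) ∧
  (∀ u, arm u = i → prob u ⊤ = 0) ∧
  (∀ v u, arm v = i → 0 < p v u → ∀ t ∈ Finset.Icc 1 B,
    ∃! t' : WithTop ℕ, R v (t : WithTop ℕ) u t' ∧ (t : WithTop ℕ) + 1 ≤ t') ∧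
  (∀ u, arm u = i → u ≠ ρ i → ∀ t ∈ Finset.Icc 1 B,
    prob u (t : WithTop ℕ) = ∑ v : S, ∑ t' ∈ Finset.Icc 1 B,
      if R v (t' : WithTop ℕ) u (t : WithTop ℕ)
        then prob v (t' : WithTop ℕ) * p v u else 0)

theorem WithTop.coe_lt_iff_coe_add_one_lt {x : WithTop ℕ} {t : ℕ} (h : x ≠ ↑(t + 1)) :
    (t : WithTop ℕ) < x ↔ ((t + 1 : ℕ) : WithTop ℕ) < x := by
  cases x using WithTop.recTopCoe with
  | top => simp
  | coe m =>
    rw [← Nat.cast_withTop] at h ⊢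
    have : m ≠ t + 1 := fun hm => h (by rw [hm])
    norm_cast
    omega

-- `⊤` when `f` has no positive value in `(s, B]`.
noncomputable def nextPosTime (B : ℕ) (f : ℕ → ℝ) (s : ℕ) : WithTop ℕ :=
  ((Icc (s + 1) B).filter (fun r => 0 < f r)).min

section NextPosTime

variable {B : ℕ} {f : ℕ → ℝ} {s : ℕ}

theorem nextPosTime_eq_coe {m : ℕ} (h : nextPosTime B f s = m) :
    s + 1 ≤ m ∧ m ≤ B ∧ 0 < f m := by
  have := Finset.mem_of_min (h.trans (Nat.cast_withTop m))
  simp only [mem_filter, mem_Icc] at this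
  exact ⟨this.1.1, this.1.2, this.2⟩

theorem nextPosTime_le {r : ℕ} (h₁ : s + 1 ≤ r) (h₂ : r ≤ B) (hr : 0 < f r) :
    nextPosTime B f s ≤ r :=
  (Finset.min_le (by simp [h₁, h₂, hr])).trans_eq (Nat.cast_withTop r).symm

theorem coe_add_one_le_nextPosTime : (s : WithTop ℕ) + 1 ≤ nextPosTime B f s := by
  cases h : nextPosTime B f s using WithTop.recTopCoe with
  | top => exact le_top
  | coe m =>
    rw [← Nat.cast_withTop] at h ⊢
    exact_mod_cast (nextPosTime_eq_coe h).1

theorem nextPosTime_ne_coe {r : ℕ} (hr : ¬ 0 < f r) : nextPosTime B f s ≠ r :=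
  fun h => hr (nextPosTime_eq_coe h).2.2

end NextPosTime

section SingleState

variable {B : ℕ} {z w d : ℕ → ℝ}

theorem sum_transit_le
    (hC2 : ∀ t ∈ Icc 1 B, ∑ r ∈ Icc 1 t, z r ≤ ∑ r ∈ Icc 1 t, w r)
    (hd : ∀ s < B, d s ≤ w (s + 1)) :
    ∀ t ≤ B, ∑ s ∈ range t, (if (t : WithTop ℕ) < nextPosTime B z s then d s else 0) ≤
      ∑ r ∈ Icc 1 t, w r - ∑ r ∈ Icc 1 t, z r := by
  intro t
  induction t with
  | zero => simp
  | succ t ih =>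
    intro ht
    rw [sum_Icc_succ_top (by omega), sum_Icc_succ_top (by omega)]
    by_cases hz : 0 < z (t + 1)
    · have harrived : ∀ s ∈ range (t + 1),
          ¬ ((t + 1 : ℕ) : WithTop ℕ) < nextPosTime B z s := fun s hs =>
        not_lt.2 (nextPosTime_le (by simpa using hs) ht hz)
      rw [sum_eq_zero fun s hs => if_neg (harrived s hs)]
      have := hC2 (t + 1) (by simp [ht])
      rw [sum_Icc_succ_top (by omega), sum_Icc_succ_top (by omega)] at this
      linarith
    · have hstill : ∀ s ∈ range t, (if ((t + 1 : ℕ) : WithTop ℕ) < nextPosTime B z s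
          then d s else 0) = if (t : WithTop ℕ) < nextPosTime B z s then d s else 0 :=
        fun s _ => if_congr (WithTop.coe_lt_iff_coe_add_one_lt (nextPosTime_ne_coe hz)).symm rfl rfl
      have hlast : ((t + 1 : ℕ) : WithTop ℕ) < nextPosTime B z t :=
        (WithTop.coe_lt_iff_coe_add_one_lt (nextPosTime_ne_coe hz)).1
          (lt_of_lt_of_le (by exact_mod_cast Nat.lt_succ_self t) coe_add_one_le_nextPosTime)
      rw [sum_range_succ, sum_congr rfl hstill, if_pos hlast]
      linarith [ih (by omega), hd t (by omega), not_lt.1 hz]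

theorem sum_Icc_arrivals (hd0 : d 0 = 0) {t : ℕ} (ht : t ≤ B) :
    ∑ r ∈ Icc 1 t, ∑ s ∈ Icc 1 B, (if nextPosTime B z s = r then d s else 0) =
      ∑ s ∈ range t, d s -
        ∑ s ∈ range t, (if (t : WithTop ℕ) < nextPosTime B z s then d s else 0) := by
  have harrived : ∀ s, ∑ r ∈ Icc 1 t, (if nextPosTime B z s = r then d s else 0) =
      if nextPosTime B z s ≤ t then d s else 0 := by
    intro s
    cases h : nextPosTime B z s using WithTop.recTopCoe with
    | top => simp
    | coe m =>
      rw [← Nat.cast_withTop] at h ⊢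
      have := (nextPosTime_eq_coe h).1
      simp only [Nat.cast_inj, sum_ite_eq, mem_Icc, Nat.cast_le]
      exact if_congr (by omega) rfl rfl
  have hvanish : ∀ s, t ≤ s → (if nextPosTime B z s ≤ t then d s else 0) = 0 := by
    intro s hs
    refine if_neg (not_le.2 (lt_of_lt_of_le ?_ coe_add_one_le_nextPosTime))
    exact_mod_cast Nat.lt_succ_of_le hs
  rw [sum_comm, sum_congr rfl fun s _ => harrived s, ← sum_sub_distrib]
  calc ∑ s ∈ Icc 1 B, (if nextPosTime B z s ≤ t then d s else 0)
      = ∑ s ∈ range (B + 1), (if nextPosTime B z s ≤ t then d s else 0) :=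
        sum_subset (fun s => by simp) fun s hs hs' => by
          obtain rfl : s = 0 := by simp only [mem_range, mem_Icc] at hs hs'; omega
          simp [hd0]
    _ = ∑ s ∈ range t, (if nextPosTime B z s ≤ t then d s else 0) :=
        (sum_subset (range_subset_range.2 (by omega)) fun s _ hs =>
          hvanish s (by simpa using hs)).symm
    _ = _ := sum_congr rfl fun s _ => by
        by_cases h : nextPosTime B z s ≤ t
        · simp [h, not_lt.2 h]
        · simp [h, not_le.1 h]

theorem sum_sub_arrivals_le_sum_sub_departures
    (hC2 : ∀ t ∈ Icc 1 B, ∑ r ∈ Icc 1 t, z r ≤ ∑ r ∈ Icc 1 t, w r)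
    (hd0 : d 0 = 0) (hd : ∀ s < B, d s ≤ w (s + 1)) {t : ℕ} (ht : t ≤ B) :
    ∑ r ∈ Icc 1 t, (z r - ∑ s ∈ Icc 1 B, if nextPosTime B z s = r then d s else 0) ≤
      ∑ r ∈ Icc 1 t, (w r - d (r - 1)) := by
  have hdepart : ∑ r ∈ Icc 1 t, d (r - 1) = ∑ s ∈ range t, d s := by
    rw [← Ico_add_one_right_eq_Icc, sum_Ico_eq_sum_range]
    simp
  rw [sum_sub_distrib, sum_sub_distrib, sum_Icc_arrivals hd0 ht, hdepart]
  linarith [sum_transit_le hC2 hd t ht]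

end SingleState

section Flow

variable {S : Type*} [Fintype S] (B : ℕ) (p : S → S → ℝ)

def departures (c : S → ℕ → ℝ) (u : S) (s : ℕ) : ℝ := ∑ v, c v s * p v u

variable (σ : ℕ → S → WithTop ℕ) (ρ₀ : S) (t₀ : ℕ)

-- `layerFlow L` is only meaningful on states of layer `L`; reading every state off its own layer
-- in `flow` keeps the recursion structural.
noncomputable def layerFlow : ℕ → S → ℕ → ℝ
  | 0, u, t => if u = ρ₀ ∧ t = t₀ then 1 else 0
  | L + 1, u, t => ∑ s ∈ Icc 1 B, if σ s u = t then departures p (layerFlow L) u s else 0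

noncomputable def flow (layer : S → ℕ) (u : S) (t : ℕ) : ℝ :=
  layerFlow B p σ ρ₀ t₀ (layer u) u t

variable {B p σ ρ₀ t₀}

theorem layerFlow_nonneg (hp : ∀ v u, 0 ≤ p v u) (L : ℕ) (u : S) (t : ℕ) :
    0 ≤ layerFlow B p σ ρ₀ t₀ L u t := by
  induction L generalizing u t with
  | zero => unfold layerFlow; split_ifs <;> norm_num
  | succ L ih =>
    refine sum_nonneg fun s _ => ?_
    split_ifs
    exacts [sum_nonneg fun v _ => mul_nonneg (ih v s) (hp v u), le_rfl]

theorem of_layerFlow_ne_zero (P : S → ℕ → Prop) (h₀ : P ρ₀ t₀)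
    (hstep : ∀ v s u (t : ℕ), P v s → p v u ≠ 0 → σ s u = t → P u t) (L : ℕ) (u : S) (t : ℕ)
    (h : layerFlow B p σ ρ₀ t₀ L u t ≠ 0) : P u t := by
  induction L generalizing u t with
  | zero =>
    unfold layerFlow at h
    obtain ⟨rfl, rfl⟩ : u = ρ₀ ∧ t = t₀ := by by_contra hne; simp [hne] at h
    exact h₀
  | succ L ih =>
    obtain ⟨s, -, hs⟩ := exists_ne_zero_of_sum_ne_zero h
    obtain ⟨hσ, hs⟩ : σ s u = t ∧ departures p (layerFlow B p σ ρ₀ t₀ L) u s ≠ 0 := by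
      split_ifs at hs with hσ
      exacts [⟨hσ, hs⟩, absurd rfl hs]
    obtain ⟨v, -, hv⟩ := exists_ne_zero_of_sum_ne_zero hs
    exact hstep v s u t (ih v s (left_ne_zero_of_mul hv)) (right_ne_zero_of_mul hv) hσ

theorem flow_eq_sum_departures {layer : S → ℕ}
    (hlayer : ∀ v u, p v u ≠ 0 → layer u = layer v + 1) {u : S} (hu : layer u ≠ 0) (t : ℕ) :
    flow B p σ ρ₀ t₀ layer u t =
      ∑ s ∈ Icc 1 B, if σ s u = t then departures p (flow B p σ ρ₀ t₀ layer) u s else 0 := by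
  obtain ⟨L, hL⟩ := Nat.exists_eq_succ_of_ne_zero hu
  rw [flow, hL, layerFlow]
  refine sum_congr rfl fun s _ => if_congr Iff.rfl (sum_congr rfl fun v _ => ?_) rfl
  by_cases hvu : p v u = 0
  · simp [hvu]
  · rw [flow, show layer v = L by have := hlayer v u hvu; omega]

theorem flow_self {layer : S → ℕ} (h : layer ρ₀ = 0) : flow B p σ ρ₀ t₀ layer ρ₀ t₀ = 1 := by
  simp [flow, h, layerFlow]

end Flow

section StrategyDag

variable {S : Type*}

def probOfFlow (c : S → ℕ → ℝ) (u : S) : WithTop ℕ → ℝ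
  | ⊤ => 0
  | (t : ℕ) => c u t

def routeRel (σ : ℕ → S → WithTop ℕ) (_ : S) (s : WithTop ℕ) (u : S) (t : WithTop ℕ) : Prop :=
  ∃ s' : ℕ, s = s' ∧ t = σ s' u

theorem routeRel_coe_iff {σ : ℕ → S → WithTop ℕ} {v u : S} {s : ℕ} {t : WithTop ℕ} :
    routeRel σ v (s : WithTop ℕ) u t ↔ t = σ s u := by
  simp [routeRel]

theorem isStrategyDag_of_flow [Fintype S] {n B : ℕ} {arm : S → Fin n} {ρ : Fin n → S}
    {p : S → S → ℝ} {i : Fin n} {σ : ℕ → S → WithTop ℕ} {c : S → ℕ → ℝ}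
    (hc : ∀ u t, 0 ≤ c u t) (hσ : ∀ (s : ℕ) u, (s : WithTop ℕ) + 1 ≤ σ s u)
    (hrec : ∀ u, arm u = i → u ≠ ρ i → ∀ t ∈ Icc 1 B,
      c u t = ∑ s ∈ Icc 1 B, if σ s u = t then departures p c u s else 0) :
    IsStrategyDag B arm ρ p i (probOfFlow c) (routeRel σ) := by
  refine ⟨fun u t _ => ?_, fun u _ => rfl, fun v u _ _ t _ => ?_, fun u hu hne t ht => ?_⟩
  · cases t using WithTop.recTopCoe
    exacts [le_rfl, hc u _]
  · simp only [routeRel_coe_iff]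
    exact ⟨σ t u, ⟨rfl, hσ t u⟩, fun t' h => h.1⟩
  · simp only [probOfFlow, Nat.cast_id, routeRel_coe_iff, eq_comm (a := (t : WithTop ℕ))]
    rw [hrec u hu hne t ht, sum_comm]
    simp only [departures, sum_ite_irrel, sum_const_zero]

end StrategyDag

theorem exists_pos_mul_le_eq {ι : Type*} {c f : ι → ℝ} (hfin : (Function.support c).Finite)
    (hne : (Function.support c).Nonempty) (hc : ∀ x, 0 ≤ c x) (hf : ∀ x, 0 ≤ f x)
    (hpos : ∀ x, c x ≠ 0 → 0 < f x) :
    ∃ ε > 0, (∀ x, ε * c x ≤ f x) ∧ ∃ x, c x ≠ 0 ∧ ε * c x = f x := by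
  obtain ⟨x₀, hx₀, hmin⟩ := Set.exists_min_image _ (fun x => f x / c x) hfin hne
  have hcx₀ : 0 < c x₀ := (hc x₀).lt_of_ne' hx₀
  refine ⟨f x₀ / c x₀, div_pos (hpos x₀ hx₀) hcx₀, fun x => ?_, x₀, hx₀, div_mul_cancel₀ _ hx₀⟩
  rcases (hc x).eq_or_lt with hx | hx
  · simpa [← hx] using hf x
  · exact (le_div_iff₀ hx).1 (hmin x hx.ne')

section Arms

variable {S : Type*} {n : ℕ} {B : ℕ} {arm : S → Fin n} {ρ : Fin n → S}
  {layer : S → ℕ} {p : S → S → ℝ} {z w : S → ℕ → ℝ}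

theorem arc_into_source_eq_zero (hp : ∀ v u, 0 ≤ p v u)
    (harc : ∀ v u, 0 < p v u → arm u = arm v ∧ layer u = layer v + 1)
    (hρlayer : ∀ i, layer (ρ i) = 0) (v : S) (i : Fin n) : p v (ρ i) = 0 := by
  by_contra h
  have := (harc v _ ((hp v _).lt_of_ne' h)).2
  rw [hρlayer] at this
  omega

theorem layer_ne_zero_of_ne_source
    (harc : ∀ v u, 0 < p v u → arm u = arm v ∧ layer u = layer v + 1)
    (hsource : ∀ u, u ≠ ρ (arm u) → ∃ v, 0 < p v u) {u : S} (hu : u ≠ ρ (arm u)) :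
    layer u ≠ 0 := by
  obtain ⟨v, hvu⟩ := hsource u hu
  have := (harc v u hvu).2
  omega

theorem exists_pred_pos [Fintype S] {u : S} (hz : ∀ v t, 0 ≤ z v t) (hw1 : w u 1 = 0)
    (hw : ∀ t ∈ Icc 2 B, w u t = ∑ v, z v (t - 1) * p v u)
    (hC2 : ∀ t ∈ Icc 1 B, ∑ r ∈ Icc 1 t, z u r ≤ ∑ r ∈ Icc 1 t, w u r)
    {t : ℕ} (ht : t ∈ Icc 1 B) (hzt : 0 < z u t) :
    ∃ v, ∃ s ∈ Icc 1 B, 0 < p v u ∧ 0 < z v s := by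
  have hZ : 0 < ∑ r ∈ Icc 1 t, z u r :=
    hzt.trans_le (single_le_sum (fun r _ => hz u r) (by simp [(mem_Icc.1 ht).1]))
  obtain ⟨r, hr, hwr⟩ : ∃ r ∈ Icc 1 t, 0 < w u r := by
    by_contra! h
    exact (hZ.trans_le (hC2 t ht)).not_ge (sum_nonpos h)
  have hr2 : r ∈ Icc 2 B := by
    have : r ≠ 1 := by rintro rfl; simp [hw1] at hwr
    simp only [mem_Icc] at hr ht ⊢
    omega
  rw [hw r hr2] at hwr
  obtain ⟨v, -, hv⟩ : ∃ v ∈ univ, 0 < z v (r - 1) * p v u := by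
    by_contra! h
    exact hwr.not_ge (sum_nonpos h)
  obtain ⟨hzv, hpv⟩ := (pos_and_pos_or_neg_and_neg_of_mul_pos hv).resolve_right
    fun h => (hz v _).not_gt h.1
  exact ⟨v, r - 1, by simp only [mem_Icc] at hr2 ⊢; omega, hpv, hzv⟩

theorem exists_pos_at_source [Fintype S]
    (harc : ∀ v u, 0 < p v u → arm u = arm v ∧ layer u = layer v + 1)
    (hz : ∀ v t, 0 ≤ z v t)
    (hC1 : ∀ u : S, u ≠ ρ (arm u) →
      w u 1 = 0 ∧ ∀ t ∈ Icc 2 B, w u t = ∑ v : S, z v (t - 1) * p v u)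
    (hC2 : ∀ u : S, ∀ t ∈ Icc 1 B, ∑ r ∈ Icc 1 t, z u r ≤ ∑ r ∈ Icc 1 t, w u r)
    (u : S) {t : ℕ} (ht : t ∈ Icc 1 B) (hzt : 0 < z u t) :
    ∃ t₀ ∈ Icc 1 B, 0 < z (ρ (arm u)) t₀ := by
  by_cases hu : u = ρ (arm u)
  · exact ⟨t, ht, hu ▸ hzt⟩
  obtain ⟨v, s, hs, hvu, hzv⟩ :=
    exists_pred_pos hz (hC1 u hu).1 (hC1 u hu).2 (hC2 u) ht hzt
  have hlt : layer v < layer u := by have := (harc v u hvu).2; omega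
  rw [(harc v u hvu).1]
  exact exists_pos_at_source harc hz hC1 hC2 v hs hzv
termination_by layer u

end Arms

theorem exists_peelable_flow {S : Type*} [Fintype S] {n B : ℕ} {arm : S → Fin n}
    {ρ : Fin n → S} {layer : S → ℕ} {p : S → S → ℝ} {z w : S → ℕ → ℝ}
    (hρ : ∀ i, arm (ρ i) = i) (hρlayer : ∀ i, layer (ρ i) = 0) (hp : ∀ v u, 0 ≤ p v u)
    (harc : ∀ v u, 0 < p v u → arm u = arm v ∧ layer u = layer v + 1)
    (hz : ∀ u t, 0 ≤ z u t)
    (hC1 : ∀ u : S, u ≠ ρ (arm u) →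
      w u 1 = 0 ∧ ∀ t ∈ Icc 2 B, w u t = ∑ v : S, z v (t - 1) * p v u)
    (hC2 : ∀ u : S, ∀ t ∈ Icc 1 B, ∑ r ∈ Icc 1 t, z u r ≤ ∑ r ∈ Icc 1 t, w u r)
    {i : Fin n} (hpos : ∃ u : S, ∃ t : ℕ, arm u = i ∧ t ∈ Icc 1 B ∧ 0 < z u t) :
    ∃ c : S → ℕ → ℝ, (∀ u t, 0 ≤ c u t) ∧ (∀ u t, c u t ≤ z u t) ∧
      (∀ u t, c u t ≠ 0 → arm u = i ∧ t ∈ Icc 1 B) ∧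
      (∀ u, layer u ≠ 0 → ∀ t : ℕ,
        c u t = ∑ s ∈ Icc 1 B, if nextPosTime B (z u) s = t then departures p c u s else 0) ∧
      ∃ u t, arm u = i ∧ 0 < z u t ∧ c u t = z u t := by
  obtain ⟨u₀, t', rfl, ht', hzt'⟩ := hpos
  obtain ⟨t₀, ht₀, hz₀⟩ := exists_pos_at_source harc hz hC1 hC2 u₀ ht' hzt'
  set f := flow B p (fun s u => nextPosTime B (z u) s) (ρ (arm u₀)) t₀ layer
  have hlayer : ∀ v u, p v u ≠ 0 → layer u = layer v + 1 :=
    fun v u h => (harc v u ((hp v u).lt_of_ne' h)).2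
  have hf : ∀ u t, 0 ≤ f u t := fun u t => layerFlow_nonneg hp _ u t
  have hsupp : ∀ u t, f u t ≠ 0 → arm u = arm u₀ ∧ t ∈ Icc 1 B ∧ 0 < z u t := by
    refine fun u t => of_layerFlow_ne_zero (fun u t => arm u = arm u₀ ∧ t ∈ Icc 1 B ∧ 0 < z u t)
      ⟨hρ _, ht₀, hz₀⟩ ?_ (layer u) u t
    intro v s u t hv hvu hσ
    obtain ⟨hst, htB, hzt⟩ := nextPosTime_eq_coe hσ
    exact ⟨(harc v u ((hp v u).lt_of_ne' hvu)).1.trans hv.1, mem_Icc.2 ⟨by omega, htB⟩, hzt⟩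
  have hfin : (Function.support fun x : S × ℕ => f x.1 x.2).Finite :=
    (univ ×ˢ Icc 1 B).finite_toSet.subset fun x hx => by simpa using (hsupp x.1 x.2 hx).2.1
  have hne : (Function.support fun x : S × ℕ => f x.1 x.2).Nonempty :=
    ⟨(ρ (arm u₀), t₀), by simp [f, flow_self (hρlayer _)]⟩
  obtain ⟨ε, hε, hεz, ⟨u₁, t₁⟩, hf₁, hε₁⟩ := exists_pos_mul_le_eq hfin hne
    (fun x => hf x.1 x.2) (fun x => hz x.1 x.2) (fun x hx => (hsupp x.1 x.2 hx).2.2)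
  refine ⟨fun u t => ε * f u t, fun u t => mul_nonneg hε.le (hf u t), fun u t => hεz (u, t),
    fun u t h => ?_, fun u hu t => ?_, u₁, t₁, (hsupp u₁ t₁ hf₁).1, (hsupp u₁ t₁ hf₁).2.2, hε₁⟩
  · obtain ⟨harm, ht, -⟩ := hsupp u t (right_ne_zero_of_mul h)
    exact ⟨harm, ht⟩
  · simp only [flow_eq_sum_departures hlayer hu, departures, mul_sum, mul_ite, mul_zero,
      mul_assoc, f]

section Residual

variable {S : Type*} [Fintype S] {n : ℕ} {B : ℕ} {arm : S → Fin n} {ρ : Fin n → S}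
  {p : S → S → ℝ} {z w c : S → ℕ → ℝ}

-- Departures at time `B` are never absorbed, so beyond the horizon `w` is kept unchanged.
noncomputable def residualW (B : ℕ) (p : S → S → ℝ) (w c : S → ℕ → ℝ) (u : S) (t : ℕ) : ℝ :=
  if t ≤ B then w u t - departures p c u (t - 1) else w u t

theorem residualW_eq_self {u : S} (h : ∀ v s, c v s * p v u = 0) (t : ℕ) :
    residualW B p w c u t = w u t := by
  simp [residualW, departures, h]

theorem residualW_le_one {u : S} (hc0 : ∀ v, c v 0 = 0) {t : ℕ} (ht : t ≤ 1) :
    residualW B p w c u t = w u t := by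
  simp [residualW, departures, show t - 1 = 0 by omega, hc0]

theorem residualW_eq_sum {u : S} {t : ℕ} (ht : t ∈ Icc 2 B)
    (hw : w u t = ∑ v, z v (t - 1) * p v u) :
    residualW B p w c u t = ∑ v, (z - c) v (t - 1) * p v u := by
  simp [residualW, (mem_Icc.1 ht).2, hw, departures, sub_mul]

theorem residualW_C1 (hc0 : ∀ v, c v 0 = 0)
    (hC1 : ∀ u : S, u ≠ ρ (arm u) →
      w u 1 = 0 ∧ ∀ t ∈ Icc 2 B, w u t = ∑ v : S, z v (t - 1) * p v u)
    (u : S) (hu : u ≠ ρ (arm u)) :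
    residualW B p w c u 1 = 0 ∧
      ∀ t ∈ Icc 2 B, residualW B p w c u t = ∑ v : S, (z - c) v (t - 1) * p v u :=
  ⟨(residualW_le_one hc0 le_rfl).trans (hC1 u hu).1,
    fun t ht => residualW_eq_sum ht ((hC1 u hu).2 t ht)⟩

theorem residualW_nonneg (hp : ∀ v u, 0 ≤ p v u) (hsrc : ∀ v j, p v (ρ j) = 0)
    (hw : ∀ u t, 0 ≤ w u t) (hcz : ∀ u t, c u t ≤ z u t) (hc0 : ∀ v, c v 0 = 0)
    (hC1 : ∀ u : S, u ≠ ρ (arm u) →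
      w u 1 = 0 ∧ ∀ t ∈ Icc 2 B, w u t = ∑ v : S, z v (t - 1) * p v u)
    (u : S) (t : ℕ) : 0 ≤ residualW B p w c u t := by
  by_cases hu : u = ρ (arm u)
  · rw [residualW_eq_self fun v s => by rw [hu, hsrc, mul_zero]]
    exact hw u t
  by_cases ht : t ∈ Icc 2 B
  · rw [(residualW_C1 hc0 hC1 u hu).2 t ht]
    exact sum_nonneg fun v _ => mul_nonneg (sub_nonneg.2 (hcz v _)) (hp v u)
  · simp only [mem_Icc, not_and_or, not_le] at ht
    rcases ht with ht | ht
    · rw [residualW_le_one hc0 (by omega)]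
      exact hw u t
    · simp [residualW, not_le.2 ht, hw u t]

theorem residualW_C2 (hp : ∀ v u, 0 ≤ p v u) (hsrc : ∀ v j, p v (ρ j) = 0)
    (hc : ∀ u t, 0 ≤ c u t) (hcz : ∀ u t, c u t ≤ z u t) (hc0 : ∀ v, c v 0 = 0)
    (hrec : ∀ u, u ≠ ρ (arm u) → ∀ t,
      c u t = ∑ s ∈ Icc 1 B, if nextPosTime B (z u) s = t then departures p c u s else 0)
    (hC1 : ∀ u : S, u ≠ ρ (arm u) →
      w u 1 = 0 ∧ ∀ t ∈ Icc 2 B, w u t = ∑ v : S, z v (t - 1) * p v u)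
    (hC2 : ∀ u : S, ∀ t ∈ Icc 1 B, ∑ r ∈ Icc 1 t, z u r ≤ ∑ r ∈ Icc 1 t, w u r)
    (u : S) (t : ℕ) (ht : t ∈ Icc 1 B) :
    ∑ r ∈ Icc 1 t, (z - c) u r ≤ ∑ r ∈ Icc 1 t, residualW B p w c u r := by
  by_cases hu : u = ρ (arm u)
  · have hw : ∀ r, residualW B p w c u r = w u r :=
      residualW_eq_self fun v s => by rw [hu, hsrc, mul_zero]
    simp_rw [hw]
    exact (sum_le_sum fun r _ => sub_le_self _ (hc u r)).trans (hC2 u t ht)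
  have htB := (mem_Icc.1 ht).2
  have hdep : ∀ s < B, departures p c u s ≤ w u (s + 1) := by
    intro s hs
    rcases Nat.eq_zero_or_pos s with rfl | hs0
    · simp [departures, hc0, (hC1 u hu).1]
    · rw [(hC1 u hu).2 (s + 1) (by simp only [mem_Icc]; omega), Nat.add_sub_cancel]
      exact sum_le_sum fun v _ => mul_le_mul_of_nonneg_right (hcz v s) (hp v u)
  calc ∑ r ∈ Icc 1 t, (z - c) u r
      = ∑ r ∈ Icc 1 t, (z u r - ∑ s ∈ Icc 1 B,
          if nextPosTime B (z u) s = r then departures p c u s else 0) := by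
        simp_rw [Pi.sub_apply, ← hrec u hu]
    _ ≤ ∑ r ∈ Icc 1 t, (w u r - departures p c u (r - 1)) :=
        sum_sub_arrivals_le_sum_sub_departures (hC2 u) (by simp [departures, hc0]) hdep htB
    _ = ∑ r ∈ Icc 1 t, residualW B p w c u r :=
        sum_congr rfl fun r hr => by simp [residualW, (mem_Icc.1 hr).2.trans htB]

end Residual

theorem stmt_10_general {S : Type*} [Fintype S] {n : ℕ}
    (B : ℕ)
    (arm : S → Fin n) (ρ : Fin n → S) (layer : S → ℕ) (p : S → S → ℝ)
    (hρ : ∀ i, arm (ρ i) = i)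
    (hρlayer : ∀ i, layer (ρ i) = 0)
    (hp : ∀ v u, 0 ≤ p v u ∧ p v u ≤ 1)
    (harc : ∀ v u, 0 < p v u → arm u = arm v ∧ layer u = layer v + 1)
    (hsource : ∀ u, u ≠ ρ (arm u) → ∃ v, 0 < p v u)
    (z w : S → ℕ → ℝ)
    (hznn : ∀ u t, 0 ≤ z u t) (hwnn : ∀ u t, 0 ≤ w u t)
    (hC1 : ∀ u : S, u ≠ ρ (arm u) →
      w u 1 = 0 ∧ ∀ t ∈ Icc 2 B, w u t = ∑ v : S, z v (t - 1) * p v u)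
    (hC2 : ∀ u : S, ∀ t ∈ Icc 1 B, ∑ t' ∈ Icc 1 t, z u t' ≤ ∑ t' ∈ Icc 1 t, w u t')
    (hC3 : ∀ t ∈ Icc 1 B, ∑ u : S, z u t ≤ 1)
    (i : Fin n)
    (hpos : ∃ u : S, ∃ t : ℕ, arm u = i ∧ t ∈ Icc 1 B ∧ 0 < z u t) :
    ∃ (prob : S → WithTop ℕ → ℝ) (R : S → WithTop ℕ → S → WithTop ℕ → Prop)
      (z' w' : S → ℕ → ℝ),
      IsStrategyDag B arm ρ p i prob R ∧
      (∀ u t, 0 ≤ z' u t) ∧ (∀ u t, 0 ≤ w' u t) ∧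
      (∀ u t, z' u t ≤ z u t) ∧
      (∀ u : S, u ≠ ρ (arm u) →
        w' u 1 = 0 ∧ ∀ t ∈ Icc 2 B, w' u t = ∑ v : S, z' v (t - 1) * p v u) ∧
      (∀ u : S, ∀ t ∈ Icc 1 B, ∑ t' ∈ Icc 1 t, z' u t' ≤ ∑ t' ∈ Icc 1 t, w' u t') ∧
      (∀ t ∈ Icc 1 B, ∑ u : S, z' u t ≤ 1) ∧
      (∀ u, arm u = i → ∀ t ∈ Icc 1 B, z u t - z' u t = prob u (t : WithTop ℕ)) ∧
      (∀ u t, arm u ≠ i → z' u t = z u t ∧ w' u t = w u t) ∧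
      (∃ u : S, ∃ t : ℕ, arm u = i ∧ z' u t = 0 ∧ 0 < z u t) := by
  have hp' : ∀ v u, 0 ≤ p v u := fun v u => (hp v u).1
  have hsrc := arc_into_source_eq_zero hp' harc hρlayer
  obtain ⟨c, hc, hcz, hsupp, hrec, u₁, t₁, hu₁, hz₁, hc₁⟩ :=
    exists_peelable_flow hρ hρlayer hp' harc hznn hC1 hC2 hpos
  have hc0 : ∀ v, c v 0 = 0 := fun v => by_contra fun h => by simpa using (hsupp v 0 h).2
  have hrec' := fun u hu => hrec u (layer_ne_zero_of_ne_source harc hsource hu)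
  have hoff : ∀ u t, arm u ≠ i → c u t = 0 := fun u t hu => by_contra fun h => hu (hsupp u t h).1
  refine ⟨probOfFlow c, routeRel fun s u => nextPosTime B (z u) s, z - c, residualW B p w c,
    isStrategyDag_of_flow hc (fun _ _ => coe_add_one_le_nextPosTime)
      (fun u hu hne t _ => hrec' u (hu ▸ hne) t),
    fun u t => sub_nonneg.2 (hcz u t), residualW_nonneg hp' hsrc hwnn hcz hc0 hC1,
    fun u t => sub_le_self _ (hc u t), residualW_C1 hc0 hC1,
    residualW_C2 hp' hsrc hc hcz hc0 hrec' hC1 hC2,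
    fun t ht => (sum_le_sum fun u _ => sub_le_self _ (hc u t)).trans (hC3 t ht),
    fun u _ t _ => sub_sub_cancel _ _, fun u t hu => ⟨by simp [hoff u t hu], ?_⟩,
    u₁, t₁, hu₁, by simp [hc₁], hz₁⟩
  refine residualW_eq_self (fun v s => ?_) t
  by_cases hvu : p v u = 0
  · rw [hvu, mul_zero]
  · rw [hoff v s fun hv => hu ((harc v u ((hp' v u).lt_of_ne' hvu)).1.trans hv), zero_mul]

/-- One peeling step of the convex-decomposition procedure in
the layered-DAG case: if `z` is positive somewhere on arm `i`, one can peel off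
a strategy dag for arm `i` from `(z, w)`, leaving a residual solution
`(z', w')` that is nonnegative, dominated by `z`, satisfies (C1')–(C3'),
differs from `(z, w)` only on arm `i`, and has a new zero coordinate. -/
theorem stmt_10 {S : Type*} [Fintype S] [DecidableEq S] {n : ℕ}
    (B : ℕ)
    (arm : S → Fin n) (ρ : Fin n → S) (layer : S → ℕ) (p : S → S → ℝ)
    (hρ : ∀ i, arm (ρ i) = i)
    (hρlayer : ∀ i, layer (ρ i) = 0)
    (hp : ∀ v u, 0 ≤ p v u ∧ p v u ≤ 1)
    (hpsum : ∀ v, ∑ u : S, p v u ≤ 1)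
    (harc : ∀ v u, 0 < p v u → arm u = arm v ∧ layer u = layer v + 1)
    (hsource : ∀ u, u ≠ ρ (arm u) → ∃ v, 0 < p v u)
    (z w : S → ℕ → ℝ)
    (hznn : ∀ u t, 0 ≤ z u t) (hwnn : ∀ u t, 0 ≤ w u t)
    (hC1 : ∀ u : S, u ≠ ρ (arm u) →
      w u 1 = 0 ∧ ∀ t ∈ Icc 2 B, w u t = ∑ v : S, z v (t - 1) * p v u)
    (hC2 : ∀ u : S, ∀ t ∈ Icc 1 B, ∑ t' ∈ Icc 1 t, z u t' ≤ ∑ t' ∈ Icc 1 t, w u t')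
    (hC3 : ∀ t ∈ Icc 1 B, ∑ u : S, z u t ≤ 1)
    (i : Fin n)
    (hpos : ∃ u : S, ∃ t : ℕ, arm u = i ∧ t ∈ Icc 1 B ∧ 0 < z u t) :
    ∃ (prob : S → WithTop ℕ → ℝ) (R : S → WithTop ℕ → S → WithTop ℕ → Prop)
      (z' w' : S → ℕ → ℝ),
      IsStrategyDag B arm ρ p i prob R ∧
      (∀ u t, 0 ≤ z' u t) ∧ (∀ u t, 0 ≤ w' u t) ∧
      (∀ u t, z' u t ≤ z u t) ∧
      (∀ u : S, u ≠ ρ (arm u) →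
        w' u 1 = 0 ∧ ∀ t ∈ Icc 2 B, w' u t = ∑ v : S, z' v (t - 1) * p v u) ∧
      (∀ u : S, ∀ t ∈ Icc 1 B, ∑ t' ∈ Icc 1 t, z' u t' ≤ ∑ t' ∈ Icc 1 t, w' u t') ∧
      (∀ t ∈ Icc 1 B, ∑ u : S, z' u t ≤ 1) ∧
      (∀ u, arm u = i → ∀ t ∈ Icc 1 B, z u t - z' u t = prob u (t : WithTop ℕ)) ∧
      (∀ u t, arm u ≠ i → z' u t = z u t ∧ w' u t = w u t) ∧
      (∃ u : S, ∃ t : ℕ, arm u = i ∧ z' u t = 0 ∧ 0 < z u t) :=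
  stmt_10_general B arm ρ layer p hρ hρlayer hp harc hsource z w hznn hwnn hC1 hC2 hC3 i hpos
end
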